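/- arXiv:1809.01443 — 8 statements merged into one kernel-verified Lean document; each statement's English description precedes it below -/
import Mathlib

section
/- Let $d \ge 2$ and $t \ge 2$ be integers, and let $\{(A_i^1, A_i^2, \ldots, A_i^d) : 1 \le i \le t\}$ be a family of finite sets such that $A_i^j \cap A_{i'}^{j'} = \emptyset$ if and only if $i = i'$ and $j \ne j'$. Then $\sum_{i=1}^{t} \sum_{j=1}^{d} |A_i^j| \ge \frac{d}{2}\, t \log_2 t$. -/
open Finset Real

/-- Counting step: for a cross-intersecting family of disjoint pairs,
`∑ᵢ 2^(-(|Bᵢ|+|Cᵢ|)) ≤ 1`. -/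
lemma pair_count {α : Type*} [DecidableEq α] (t : ℕ) (B C : Fin t → Finset α)
    (hdisj : ∀ i, B i ∩ C i = ∅)
    (hcross : ∀ i i' : Fin t, i ≠ i' → (B i ∩ C i').Nonempty) :
    ∑ i : Fin t, (((2 : ℝ) ^ ((B i).card + (C i).card))⁻¹) ≤ 1 := by
  classical
  set U : Finset α := Finset.univ.biUnion (fun i => B i ∪ C i) with hU
  have hBU : ∀ i, B i ⊆ U := fun i =>
    (subset_union_left).trans (subset_biUnion_of_mem (fun i => B i ∪ C i) (mem_univ i))
  have hCU : ∀ i, C i ⊆ U := fun i =>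
    (subset_union_right).trans (subset_biUnion_of_mem (fun i => B i ∪ C i) (mem_univ i))
  set S : Fin t → Finset (Finset α) := fun i => Finset.Icc (B i) (U \ C i) with hS
  have hsub : ∀ i, B i ⊆ U \ C i := by
    intro i
    intro x hx
    rw [mem_sdiff]
    refine ⟨hBU i hx, fun hc => ?_⟩
    have : x ∈ B i ∩ C i := mem_inter.2 ⟨hx, hc⟩
    simp [hdisj i] at this
  have hcardS : ∀ i, (S i).card = 2 ^ (U.card - ((B i).card + (C i).card)) := by
    intro i
    rw [hS]
    rw [Finset.card_Icc_finset (hsub i)]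
    congr 1
    rw [card_sdiff_of_subset (hCU i)]
    omega
  have hdisjS : ((Finset.univ : Finset (Fin t)) : Set (Fin t)).PairwiseDisjoint S := by
    intro i _ i' _ hii
    simp only [Function.onFun]
    rw [Finset.disjoint_left]
    intro X hX hX'
    rw [hS, Finset.mem_Icc] at hX hX'
    obtain ⟨x, hx⟩ := hcross i i' hii
    rw [mem_inter] at hx
    have hx1 : x ∈ X := hX.1 hx.1
    have hx2 : x ∈ U \ C i' := hX'.2 hx1
    rw [mem_sdiff] at hx2
    exact hx2.2 hx.2
  have hkey : ∑ i : Fin t, (S i).card ≤ 2 ^ U.card := by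
    rw [← Finset.card_biUnion hdisjS]
    have : (Finset.univ.biUnion S) ⊆ U.powerset := by
      intro X hX
      rw [Finset.mem_biUnion] at hX
      obtain ⟨i, _, hXi⟩ := hX
      rw [hS, Finset.mem_Icc] at hXi
      rw [Finset.mem_powerset]
      exact hXi.2.trans (sdiff_subset)
    calc (Finset.univ.biUnion S).card ≤ U.powerset.card := Finset.card_le_card this
      _ = 2 ^ U.card := Finset.card_powerset U
  have hle : ∀ i, (B i).card + (C i).card ≤ U.card := by
    intro i
    have : B i ∪ C i ⊆ U := union_subset (hBU i) (hCU i)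
    have h2 := Finset.card_le_card this
    have h3 : (B i ∪ C i).card = (B i).card + (C i).card := by
      rw [card_union_of_disjoint (disjoint_iff_inter_eq_empty.2 (hdisj i))]
    omega
  -- move to the reals
  have hreal : ∑ i : Fin t, ((2 : ℝ) ^ U.card / (2 : ℝ) ^ ((B i).card + (C i).card))
      ≤ (2 : ℝ) ^ U.card := by
    calc ∑ i : Fin t, ((2 : ℝ) ^ U.card / (2 : ℝ) ^ ((B i).card + (C i).card))
        = ∑ i : Fin t, ((2 : ℝ) ^ (U.card - ((B i).card + (C i).card))) := by
          refine Finset.sum_congr rfl fun i _ => ?_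
          rw [pow_sub₀ (2:ℝ) (by norm_num) (hle i), div_eq_mul_inv]
      _ = ((∑ i : Fin t, 2 ^ (U.card - ((B i).card + (C i).card)) : ℕ) : ℝ) := by
          push_cast; ring_nf
      _ ≤ ((2 ^ U.card : ℕ) : ℝ) := by
          have : ∑ i : Fin t, 2 ^ (U.card - ((B i).card + (C i).card)) ≤ 2 ^ U.card := by
            calc ∑ i : Fin t, 2 ^ (U.card - ((B i).card + (C i).card))
                = ∑ i : Fin t, (S i).card := by
                  exact Finset.sum_congr rfl fun i _ => (hcardS i).symm
              _ ≤ 2 ^ U.card := hkey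
          exact_mod_cast this
      _ = (2 : ℝ) ^ U.card := by push_cast; ring
  have hpos : (0 : ℝ) < (2 : ℝ) ^ U.card := by positivity
  have := (div_le_one hpos).2 (by
    calc (∑ i : Fin t, (((2 : ℝ) ^ ((B i).card + (C i).card))⁻¹)) * (2 : ℝ) ^ U.card
        = ∑ i : Fin t, ((2 : ℝ) ^ U.card / (2 : ℝ) ^ ((B i).card + (C i).card)) := by
          rw [Finset.sum_mul]
          refine Finset.sum_congr rfl fun i _ => ?_
          field_simp
      _ ≤ (2 : ℝ) ^ U.card := hreal)
  calc ∑ i : Fin t, (((2 : ℝ) ^ ((B i).card + (C i).card))⁻¹)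
      = (∑ i : Fin t, (((2 : ℝ) ^ ((B i).card + (C i).card))⁻¹)) * (2 : ℝ) ^ U.card
        / (2 : ℝ) ^ U.card := by field_simp
    _ ≤ 1 := this

/-- Pair lemma: for a cross-intersecting family of disjoint pairs,
`∑ᵢ (|Bᵢ|+|Cᵢ|) ≥ t log₂ t`. -/
lemma pair_lemma {α : Type*} [DecidableEq α] (t : ℕ) (ht : 2 ≤ t)
    (B C : Fin t → Finset α)
    (hdisj : ∀ i, B i ∩ C i = ∅)
    (hcross : ∀ i i' : Fin t, i ≠ i' → (B i ∩ C i').Nonempty) :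
    (t : ℝ) * Real.logb 2 t ≤ ∑ i : Fin t, (((B i).card : ℝ) + ((C i).card : ℝ)) := by
  classical
  have htpos : (0 : ℝ) < t := by positivity
  set s : Fin t → ℝ := fun i => ((B i).card : ℝ) + ((C i).card : ℝ) with hs
  -- Jensen with exp
  have hjensen := convexOn_exp.map_sum_le (t := (Finset.univ : Finset (Fin t)))
    (w := fun _ => (t : ℝ)⁻¹) (p := fun i => -(Real.log 2) * s i)
    (fun i _ => by positivity)
    (by simp [Finset.card_univ]; field_simp)
    (fun i _ => Set.mem_univ _)
  have hexp : ∀ i : Fin t, Real.exp (-(Real.log 2) * s i)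
      = ((2 : ℝ) ^ ((B i).card + (C i).card))⁻¹ := by
    intro i
    rw [neg_mul, Real.exp_neg]
    congr 1
    rw [hs]
    push_cast
    rw [mul_add, Real.exp_add]
    have e : ∀ n : ℕ, Real.exp (Real.log 2 * n) = (2:ℝ)^n := fun n => by
      rw [mul_comm, Real.exp_nat_mul, Real.exp_log (by norm_num)]
    rw [e, e, pow_add]
  have hcount := pair_count t B C hdisj hcross
  have h1 : Real.exp (∑ i : Fin t, (t : ℝ)⁻¹ • (-(Real.log 2) * s i)) ≤ (t : ℝ)⁻¹ := by
    refine hjensen.trans ?_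
    calc ∑ i : Fin t, (t : ℝ)⁻¹ • Real.exp (-(Real.log 2) * s i)
        = (t : ℝ)⁻¹ * ∑ i : Fin t, ((2 : ℝ) ^ ((B i).card + (C i).card))⁻¹ := by
          rw [Finset.mul_sum]
          exact Finset.sum_congr rfl fun i _ => by rw [smul_eq_mul, hexp]
      _ ≤ (t : ℝ)⁻¹ * 1 := by
          exact mul_le_mul_of_nonneg_left hcount (by positivity)
      _ = (t : ℝ)⁻¹ := mul_one _
  have h2 : ∑ i : Fin t, (t : ℝ)⁻¹ • (-(Real.log 2) * s i)
      = -(Real.log 2) * ((∑ i : Fin t, s i) / t) := by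
    simp only [smul_eq_mul]
    rw [← Finset.mul_sum, ← Finset.mul_sum]
    field_simp
    try ring
  rw [h2] at h1
  have h3 : -(Real.log 2) * ((∑ i : Fin t, s i) / t) ≤ Real.log ((t : ℝ)⁻¹) := by
    rw [← Real.exp_le_exp, Real.exp_log (by positivity)]
    exact h1
  rw [Real.log_inv] at h3
  have hlog2 : (0 : ℝ) < Real.log 2 := Real.log_pos (by norm_num)
  have h4 : Real.log t ≤ Real.log 2 * ((∑ i : Fin t, s i) / t) := by nlinarith
  have h5 : Real.logb 2 t ≤ (∑ i : Fin t, s i) / t := by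
    rw [Real.logb, div_le_iff₀ hlog2] at *
    nlinarith
  calc (t : ℝ) * Real.logb 2 t ≤ (t : ℝ) * ((∑ i : Fin t, s i) / t) :=
        mul_le_mul_of_nonneg_left h5 (le_of_lt htpos)
    _ = ∑ i : Fin t, s i := by field_simp
    _ = ∑ i : Fin t, (((B i).card : ℝ) + ((C i).card : ℝ)) := rfl

/-- **Theorem (lower bound).** Let `d ≥ 2` and `t ≥ 2` and let
`{(A i 1, …, A i d) : 1 ≤ i ≤ t}` be a family of finite sets such that
`A i j ∩ A i' j' = ∅` iff `i = i'` and `j ≠ j'`. Then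
`∑_{i,j} |A i j| ≥ (d/2) · t · log₂ t`. -/
theorem stmt0 {α : Type*} [DecidableEq α] (d t : ℕ) (hd : 2 ≤ d) (ht : 2 ≤ t)
    (A : Fin t → Fin d → Finset α)
    (hA : ∀ (i i' : Fin t) (j j' : Fin d),
      A i j ∩ A i' j' = ∅ ↔ (i = i' ∧ j ≠ j')) :
    (d : ℝ) / 2 * t * Real.logb 2 t ≤ ∑ i : Fin t, ∑ j : Fin d, ((A i j).card : ℝ) := by
  classical
  set c : Fin d → ℝ := fun j => ∑ i : Fin t, ((A i j).card : ℝ) with hc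
  set Sv : ℝ := ∑ j : Fin d, c j with hSv
  -- per-pair bound
  have hpair : ∀ j j' : Fin d, j ≠ j' → (t : ℝ) * Real.logb 2 t ≤ c j + c j' := by
    intro j j' hjj
    have := pair_lemma t ht (fun i => A i j) (fun i => A i j')
      (fun i => (hA i i j j').2 ⟨rfl, hjj⟩)
      (fun i i' hii => by
        rw [Finset.nonempty_iff_ne_empty]
        intro h
        exact hii ((hA i i' j j').1 h).1)
    calc (t : ℝ) * Real.logb 2 t
        ≤ ∑ i : Fin t, (((A i j).card : ℝ) + ((A i j').card : ℝ)) := this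
      _ = c j + c j' := by rw [hc]; simp [Finset.sum_add_distrib]
  -- sum over ordered pairs
  have hsum : ∑ j : Fin d, ∑ j' ∈ Finset.univ.erase j, (c j + c j')
      = 2 * ((d : ℝ) - 1) * Sv := by
    have hcard : ∀ j : Fin d, (Finset.univ.erase j).card = d - 1 := by
      intro j; rw [Finset.card_erase_of_mem (mem_univ j), Finset.card_univ, Fintype.card_fin]
    have : ∀ j : Fin d, ∑ j' ∈ Finset.univ.erase j, (c j + c j')
        = ((d : ℝ) - 1) * c j + (Sv - c j) := by
      intro j
      rw [Finset.sum_add_distrib, Finset.sum_const, hcard j]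
      have h1 : ∑ j' ∈ Finset.univ.erase j, c j' = Sv - c j := by
        rw [hSv, ← Finset.sum_erase_add Finset.univ c (mem_univ j)]; ring
      rw [h1, nsmul_eq_mul]
      have : ((d - 1 : ℕ) : ℝ) = (d : ℝ) - 1 := by
        have : 1 ≤ d := le_trans one_le_two hd
        push_cast [this]; ring
      rw [this]
    rw [Finset.sum_congr rfl fun j _ => this j]
    rw [Finset.sum_add_distrib, Finset.sum_sub_distrib, ← Finset.mul_sum,
      Finset.sum_const, Finset.card_univ, Fintype.card_fin, nsmul_eq_mul]
    rw [← hSv]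
    ring
  have hlower : (d : ℝ) * ((d : ℝ) - 1) * ((t : ℝ) * Real.logb 2 t)
      ≤ ∑ j : Fin d, ∑ j' ∈ Finset.univ.erase j, (c j + c j') := by
    calc (d : ℝ) * ((d : ℝ) - 1) * ((t : ℝ) * Real.logb 2 t)
        = ∑ j : Fin d, ∑ _j' ∈ Finset.univ.erase j, ((t : ℝ) * Real.logb 2 t) := by
          rw [Finset.sum_congr rfl (fun j _ => Finset.sum_const _)]
          simp only [Finset.card_erase_of_mem (mem_univ _), Finset.card_univ,
            Fintype.card_fin, nsmul_eq_mul, Finset.sum_const]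
          have : 1 ≤ d := le_trans one_le_two hd
          push_cast [this]
          ring
      _ ≤ _ := by
          refine Finset.sum_le_sum fun j _ => Finset.sum_le_sum fun j' hj' => ?_
          exact hpair j j' (Ne.symm (Finset.ne_of_mem_erase hj'))
  rw [hsum] at hlower
  have hd1 : (0 : ℝ) < (d : ℝ) - 1 := by
    have : (2 : ℝ) ≤ d := by exact_mod_cast hd
    linarith
  have hfin : ∑ i : Fin t, ∑ j : Fin d, ((A i j).card : ℝ) = Sv := by
    rw [hSv, hc, Finset.sum_comm]
  rw [hfin]
  nlinarith [hlower]
end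

section
/- For all integers $d \ge 2$ and $t \ge 2$, the sigma clique cover number of the complete $t$-partite graph with all parts of size $d$ satisfies $scc(K_t(d)) \ge \frac{d}{2}\, t \log_2 t$. -/
/-- The sigma clique cover number of a graph `G`: the least possible total weight
(sum of sizes, with multiplicity) of a family of cliques of `G` covering all
edges of `G`. -/
noncomputable def sigmaCliqueCover {V : Type*} (G : SimpleGraph V) : ℕ :=
  sInf {w : ℕ | ∃ C : Multiset (Finset V),
    (∀ c ∈ C, G.IsClique (c : Set V)) ∧
    (∀ u v : V, G.Adj u v → ∃ c ∈ C, u ∈ c ∧ v ∈ c) ∧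
    (C.map Finset.card).sum = w}

/-- `Ktd t d` is the complete `t`-partite graph with every part of size `d`. -/
def Ktd (t d : ℕ) : SimpleGraph (Σ _ : Fin t, Fin d) :=
  SimpleGraph.completeMultipartiteGraph (fun _ : Fin t => Fin d)

open Finset

lemma ktd_adj {t d : ℕ} (u v : Σ _ : Fin t, Fin d) :
    (Ktd t d).Adj u v ↔ u.1 ≠ v.1 := Iff.rfl

lemma sum_offDiag_helper {α : Type*} [Fintype α] [DecidableEq α] (F : α → α → ℝ) :
    ∑ q ∈ (Finset.univ : Finset α).offDiag, F q.1 q.2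
      = (∑ a, ∑ b, F a b) - ∑ a, F a a := by
  have hod : (Finset.univ : Finset α).offDiag
      = (univ ×ˢ univ).filter (fun a : α × α => a.1 ≠ a.2) := by ext x; simp
  rw [hod, Finset.sum_filter, Finset.univ_product_univ, Fintype.sum_prod_type,
    ← Finset.sum_sub_distrib]
  refine Finset.sum_congr rfl fun a _ => ?_
  have : ∀ b, (if (a, b).1 ≠ (a, b).2 then F (a, b).1 (a, b).2 else 0)
      = F a b - (if b = a then F a b else 0) := by
    intro b
    rcases eq_or_ne a b with h | h
    · subst h; simp
    · simp [h, Ne.symm h]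
  rw [Finset.sum_congr rfl fun b _ => this b, Finset.sum_sub_distrib,
    Finset.sum_ite_eq' univ a (fun b => F a b)]
  simp

lemma entropy_bound {α : Type*} (P : Finset α) (σ : α → ℕ) (M : ℝ) (hM : 0 < M)
    (hP : P.Nonempty) (h : ∑ p ∈ P, ((2:ℝ) ^ σ p)⁻¹ ≤ M) :
    (P.card : ℝ) * Real.log (P.card / M) ≤ (∑ p ∈ P, (σ p : ℝ)) * Real.log 2 := by
  set N : ℝ := (P.card : ℝ) with hNdef
  have hN : 0 < N := by
    simp only [hNdef]
    exact_mod_cast Finset.card_pos.mpr hP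
  set c : ℝ := Real.log (M / N) with hc
  have hec : Real.exp c = M / N := Real.exp_log (by positivity)
  -- pointwise tangent line bound
  have key : ∀ p ∈ P, Real.exp c * ((-(σ p : ℝ) * Real.log 2 - c) + 1)
      ≤ ((2:ℝ) ^ σ p)⁻¹ := by
    intro p _
    have h1 : ((-(σ p : ℝ) * Real.log 2 - c) + 1) ≤ Real.exp (-(σ p : ℝ) * Real.log 2 - c) :=
      Real.add_one_le_exp _
    have h2 : Real.exp c * Real.exp (-(σ p : ℝ) * Real.log 2 - c)
        = ((2:ℝ) ^ σ p)⁻¹ := by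
      rw [← Real.exp_add]
      have : c + (-(σ p : ℝ) * Real.log 2 - c) = -((σ p : ℝ) * Real.log 2) := by ring
      rw [this, Real.exp_neg, Real.exp_nat_mul, Real.exp_log two_pos]
    calc Real.exp c * ((-(σ p : ℝ) * Real.log 2 - c) + 1)
        ≤ Real.exp c * Real.exp (-(σ p : ℝ) * Real.log 2 - c) := by
          exact mul_le_mul_of_nonneg_left h1 (Real.exp_pos c).le
      _ = ((2:ℝ) ^ σ p)⁻¹ := h2
  have hsum : Real.exp c * (∑ p ∈ P, ((-(σ p : ℝ) * Real.log 2 - c) + 1)) ≤ M := by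
    rw [Finset.mul_sum]
    exact le_trans (Finset.sum_le_sum key) h
  have hexp : (∑ p ∈ P, ((-(σ p : ℝ) * Real.log 2 - c) + 1))
      = -(Real.log 2) * (∑ p ∈ P, (σ p : ℝ)) - N * c + N := by
    rw [Finset.sum_add_distrib, Finset.sum_sub_distrib, Finset.sum_const, Finset.sum_const]
    rw [← Finset.sum_mul, Finset.sum_neg_distrib]
    simp only [hNdef, nsmul_eq_mul, mul_one]
    ring
  rw [hexp, hec] at hsum
  have hMN : (M / N) * (-(Real.log 2) * (∑ p ∈ P, (σ p : ℝ)) - N * c + N) ≤ M := hsum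
  have h3 : -(Real.log 2) * (∑ p ∈ P, (σ p : ℝ)) - N * c ≤ 0 := by
    have hM' : M = (M / N) * N := by field_simp
    nlinarith [div_pos hM hN]
  have hlog : Real.log (N / M) = -c := by
    rw [hc, ← Real.log_inv]
    congr 1
    field_simp
  rw [hlog]
  nlinarith

set_option maxHeartbeats 1000000 in
lemma main_indexed (d t n : ℕ) (hd : 2 ≤ d) (ht : 2 ≤ t)
    (clq : Fin n → Finset (Σ _ : Fin t, Fin d))
    (h1 : ∀ k, (Ktd t d).IsClique ((clq k : Finset (Σ _ : Fin t, Fin d)) : Set (Σ _ : Fin t, Fin d)))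
    (h2 : ∀ u v, (Ktd t d).Adj u v → ∃ k, u ∈ clq k ∧ v ∈ clq k) :
    (d : ℝ)/2 * t * Real.logb 2 t ≤ ∑ k, ((clq k).card : ℝ) := by
  classical
  -- the set of (indices of) cliques containing a vertex
  set S : (Σ _ : Fin t, Fin d) → Finset (Fin n) :=
    fun v => univ.filter (fun k => v ∈ clq k) with hS
  -- every vertex is in some clique
  have hnt : ∀ i : Fin t, ∃ j : Fin t, j ≠ i := by
    intro i
    by_cases h : i.val = 0
    · exact ⟨⟨1, by omega⟩, fun hc => by simp [Fin.ext_iff] at hc; omega⟩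
    · exact ⟨⟨0, by omega⟩, fun hc => by simp [Fin.ext_iff] at hc; omega⟩
  have hSne : ∀ v, (S v).Nonempty := by
    rintro ⟨i, a⟩
    obtain ⟨j, hj⟩ := hnt i
    obtain ⟨k, hk1, _⟩ := h2 ⟨i, a⟩ ⟨j, a⟩ ((ktd_adj _ _).mpr (by simpa using hj.symm))
    exact ⟨k, by simp [hS, hk1]⟩
  -- cliques meet each part at most once
  have hdisjS : ∀ (i : Fin t) (a b : Fin d), a ≠ b → Disjoint (S ⟨i, a⟩) (S ⟨i, b⟩) := by
    intro i a b hab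
    rw [Finset.disjoint_left]
    intro k hka hkb
    simp only [hS, Finset.mem_filter] at hka hkb
    have hadj := h1 k (Finset.mem_coe.mpr hka.2) (Finset.mem_coe.mpr hkb.2)
      (by intro hc; exact hab (by cases hc; rfl))
    exact ((ktd_adj _ _).mp hadj) rfl
  -- crossing lemma
  have cross : ∀ (f : Fin n → Bool) (i j : Fin t) (a b : Fin d), i ≠ j →
      (∀ k ∈ S ⟨i, a⟩, f k = true) → (∀ k ∈ S ⟨j, b⟩, f k = false) → False := by
    intro f i j a b hij htrue hfalse
    obtain ⟨k, hk1, hk2⟩ := h2 ⟨i, a⟩ ⟨j, b⟩ ((ktd_adj _ _).mpr (by simpa using hij))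
    have h1' : f k = true := htrue k (by simp [hS, hk1])
    have h2' : f k = false := hfalse k (by simp [hS, hk2])
    rw [h1'] at h2'; exact Bool.noConfusion h2'
  -- all-false and all-true vertices per part
  set A : (Fin n → Bool) → Fin t → Finset (Fin d) :=
    fun f i => univ.filter (fun a => ∀ k ∈ S ⟨i, a⟩, f k = false) with hA
  set B : (Fin n → Bool) → Fin t → Finset (Fin d) :=
    fun f i => univ.filter (fun a => ∀ k ∈ S ⟨i, a⟩, f k = true) with hB
  have hAB : ∀ f i a, a ∈ A f i → a ∈ B f i → False := by
    intro f i a haA haB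
    obtain ⟨k, hk⟩ := hSne ⟨i, a⟩
    simp only [hA, hB, Finset.mem_filter] at haA haB
    have := haA.2 k hk; have := haB.2 k hk
    simp_all
  -- Step 1 : per labeling bound
  have L1 : ∀ f : Fin n → Bool,
      ∑ i, ((A f i).card : ℝ) * ((B f i).card : ℝ) * 4 ≤ (d : ℝ)^2 := by
    intro f
    by_cases hex : ∃ i, (A f i).Nonempty ∧ (B f i).Nonempty
    · obtain ⟨i₀, hA0, hB0⟩ := hex
      obtain ⟨b₀, hb₀⟩ := hB0
      have hz : ∀ j, j ≠ i₀ → A f j = ∅ := by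
        intro j hj
        rw [Finset.eq_empty_iff_forall_notMem]
        intro a haj
        simp only [hA, hB, Finset.mem_filter] at haj hb₀
        exact cross f i₀ j b₀ a (Ne.symm hj) hb₀.2 haj.2
      rw [Finset.sum_eq_single i₀ (fun j _ hj => by rw [hz j hj]; simp)
        (fun h => absurd (mem_univ i₀) h)]
      have hdAB : Disjoint (A f i₀) (B f i₀) :=
        Finset.disjoint_left.mpr (fun {a} ha hb => (hAB f i₀ a ha hb).elim)
      have hcard : (A f i₀).card + (B f i₀).card ≤ d := by
        rw [← Finset.card_union_of_disjoint hdAB]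
        simpa using Finset.card_le_univ (A f i₀ ∪ B f i₀)
      have hc' : ((A f i₀).card : ℝ) + ((B f i₀).card : ℝ) ≤ (d : ℝ) := by
        exact_mod_cast hcard
      nlinarith [sq_nonneg (((A f i₀).card : ℝ) - ((B f i₀).card : ℝ)),
        (by positivity : (0:ℝ) ≤ ((A f i₀).card : ℝ)),
        (by positivity : (0:ℝ) ≤ ((B f i₀).card : ℝ))]
    · have hzero : ∀ i, ((A f i).card : ℝ) * ((B f i).card : ℝ) * 4 = 0 := by
        intro i
        rcases Finset.eq_empty_or_nonempty (A f i) with h | h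
        · simp [h]
        rcases Finset.eq_empty_or_nonempty (B f i) with h' | h'
        · simp [h']
        · exact absurd ⟨i, h, h'⟩ hex
      rw [Finset.sum_congr rfl (fun i _ => hzero i)]
      simp only [Finset.sum_const_zero]
      positivity
  -- Step 2 : counting labelings for a fixed ordered pair
  have L2 : ∀ (i : Fin t) (a b : Fin d), a ≠ b →
      ∑ f : Fin n → Bool,
        ((if a ∈ A f i then (1:ℝ) else 0) * (if b ∈ B f i then (1:ℝ) else 0))
      = (2:ℝ)^n * (((2:ℝ)^((S ⟨i,a⟩).card + (S ⟨i,b⟩).card))⁻¹) := by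
    intro i a b hab
    have hdisj : Disjoint (S ⟨i,a⟩) (S ⟨i,b⟩) := hdisjS i a b hab
    set g : Fin n → Bool → ℝ := fun k x =>
      if k ∈ S ⟨i,a⟩ then (if x = false then 1 else 0)
      else if k ∈ S ⟨i,b⟩ then (if x = true then 1 else 0) else 1 with hg
    have hfactor : ∀ f : Fin n → Bool,
        (if a ∈ A f i then (1:ℝ) else 0) * (if b ∈ B f i then (1:ℝ) else 0)
          = ∏ k, g k (f k) := by
      intro f
      by_cases hAm : a ∈ A f i
      · by_cases hBm : b ∈ B f i
        · rw [if_pos hAm, if_pos hBm, one_mul]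
          refine (Finset.prod_eq_one ?_).symm
          intro k _
          simp only [hA, hB, Finset.mem_filter] at hAm hBm
          by_cases h1 : k ∈ S ⟨i,a⟩
          · have := hAm.2 k h1
            simp [hg, h1, this]
          · by_cases h2 : k ∈ S ⟨i,b⟩
            · have := hBm.2 k h2
              simp [hg, h1, h2, this]
            · simp [hg, h1, h2]
        · rw [if_neg hBm, mul_zero]
          simp only [hB, Finset.mem_filter, Finset.mem_univ, true_and] at hBm
          push_neg at hBm
          obtain ⟨k, hk, hfk⟩ := hBm
          have hknotsa : k ∉ S ⟨i,a⟩ := fun hka => (Finset.disjoint_left.mp hdisj hka) hk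
          symm
          apply Finset.prod_eq_zero (Finset.mem_univ k)
          have hfkf : f k = false := by
            cases hfk' : f k
            · rfl
            · exact absurd hfk' hfk
          simp [hg, hknotsa, hk, hfkf]
      · rw [if_neg hAm, zero_mul]
        simp only [hA, Finset.mem_filter, Finset.mem_univ, true_and] at hAm
        push_neg at hAm
        obtain ⟨k, hk, hfk⟩ := hAm
        have hfkt : f k = true := by
          cases hfk' : f k
          · exact absurd hfk' hfk
          · rfl
        symm
        apply Finset.prod_eq_zero (Finset.mem_univ k)
        simp [hg, hk, hfkt]
    rw [Finset.sum_congr rfl (fun f _ => hfactor f)]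
    rw [← Fintype.prod_sum (fun k (x : Bool) => g k x)]
    have hval : ∀ k, ∑ x : Bool, g k x = if k ∈ S ⟨i,a⟩ ∪ S ⟨i,b⟩ then 1 else 2 := by
      intro k
      rw [Fintype.sum_bool]
      by_cases h1 : k ∈ S ⟨i,a⟩
      · simp [hg, h1, Finset.mem_union]
      · by_cases h2 : k ∈ S ⟨i,b⟩
        · simp [hg, h1, h2, Finset.mem_union]
        · simp [hg, h1, h2, Finset.mem_union]
          norm_num
    rw [Finset.prod_congr rfl (fun k _ => hval k)]
    rw [Finset.prod_ite, Finset.prod_const_one, one_mul, Finset.prod_const]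
    have hfilter : (univ.filter (fun k => ¬ (k ∈ S ⟨i,a⟩ ∪ S ⟨i,b⟩)))
        = (S ⟨i,a⟩ ∪ S ⟨i,b⟩)ᶜ := by
      ext k; simp [Finset.mem_compl]
    rw [hfilter, Finset.card_compl, Finset.card_union_of_disjoint hdisj, Fintype.card_fin]
    have hle : (S ⟨i,a⟩).card + (S ⟨i,b⟩).card ≤ n := by
      rw [← Finset.card_union_of_disjoint hdisj]
      simpa using Finset.card_le_univ (S ⟨i,a⟩ ∪ S ⟨i,b⟩)
    have hpm := pow_sub_mul_pow (2:ℝ) hle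
    have h2ne : ((2:ℝ) ^ ((S ⟨i,a⟩).card + (S ⟨i,b⟩).card)) ≠ 0 := by positivity
    rw [eq_mul_inv_iff_mul_eq₀ h2ne]
    exact hpm
  -- the index set of ordered pairs
  set P : Finset (Fin t × Fin d × Fin d) :=
    (univ : Finset (Fin t)) ×ˢ (univ : Finset (Fin d)).offDiag with hP
  set σ : Fin t × Fin d × Fin d → ℕ :=
    fun p => (S ⟨p.1, p.2.1⟩).card + (S ⟨p.1, p.2.2⟩).card with hσ
  -- Step 3 : summed bound
  have hcardR : ∀ (s : Finset (Fin d)), ∑ a : Fin d, (if a ∈ s then (1:ℝ) else 0) = (s.card : ℝ) := by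
    intro s
    rw [Finset.sum_boole, Finset.filter_univ_mem]
  have hprod : ∀ (f : Fin n → Bool) (i : Fin t), ((A f i).card : ℝ) * ((B f i).card : ℝ)
      = ∑ q ∈ (univ : Finset (Fin d)).offDiag,
          (if q.1 ∈ A f i then (1:ℝ) else 0) * (if q.2 ∈ B f i then (1:ℝ) else 0) := by
    intro f i
    have hdiag : ∀ a : Fin d,
        (if a ∈ A f i then (1:ℝ) else 0) * (if a ∈ B f i then (1:ℝ) else 0) = 0 := by
      intro a
      by_cases h1 : a ∈ A f i
      · by_cases h2 : a ∈ B f i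
        · exact (hAB f i a h1 h2).elim
        · simp [h2]
      · simp [h1]
    rw [sum_offDiag_helper
      (fun a b => (if a ∈ A f i then (1:ℝ) else 0) * (if b ∈ B f i then (1:ℝ) else 0))]
    rw [Finset.sum_congr rfl (fun a _ => hdiag a), Finset.sum_const_zero, sub_zero,
      ← Finset.sum_mul_sum, hcardR, hcardR]
  have Hsum : ∑ f : Fin n → Bool, ∑ i, ((A f i).card : ℝ) * ((B f i).card : ℝ) * 4
      ≤ (2:ℝ)^n * (d:ℝ)^2 := by
    calc ∑ f : Fin n → Bool, ∑ i, ((A f i).card : ℝ) * ((B f i).card : ℝ) * 4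
        ≤ ∑ _f : Fin n → Bool, (d:ℝ)^2 := Finset.sum_le_sum (fun f _ => L1 f)
      _ = (2:ℝ)^n * (d:ℝ)^2 := by
          rw [Finset.sum_const, nsmul_eq_mul]
          congr 1
          rw [Finset.card_univ, Fintype.card_fun]
          push_cast
          simp
  have Hrw : ∑ f : Fin n → Bool, ∑ i, ((A f i).card : ℝ) * ((B f i).card : ℝ) * 4
      = ∑ p ∈ P, ((2:ℝ)^n * ((2:ℝ)^(σ p))⁻¹) * 4 := by
    rw [Finset.sum_comm, hP, Finset.sum_product]
    refine Finset.sum_congr rfl fun i _ => ?_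
    rw [Finset.sum_congr rfl (fun f (_ : f ∈ univ) => by rw [hprod f i, Finset.sum_mul])]
    rw [Finset.sum_comm]
    refine Finset.sum_congr rfl fun q hq => ?_
    have hqne : q.1 ≠ q.2 := (Finset.mem_offDiag.mp hq).2.2
    rw [← Finset.sum_mul, L2 i q.1 q.2 hqne]
  have L3 : ∑ p ∈ P, ((2:ℝ) ^ σ p)⁻¹ ≤ (d:ℝ)^2 / 4 := by
    rw [Hrw] at Hsum
    have Hle2 : (∑ p ∈ P, ((2:ℝ)^(σ p))⁻¹) * ((2:ℝ)^n * 4) ≤ (2:ℝ)^n * (d:ℝ)^2 := by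
      rw [Finset.sum_mul]
      refine le_trans (le_of_eq (Finset.sum_congr rfl fun p _ => by ring)) Hsum
    have h48 : (0:ℝ) < (2:ℝ)^n * 4 := by positivity
    rw [← mul_le_mul_iff_of_pos_right h48]
    refine le_trans Hle2 (le_of_eq ?_)
    ring
  -- weight identity
  have Wsum : ∑ k, ((clq k).card : ℝ) = ∑ v : (Σ _ : Fin t, Fin d), ((S v).card : ℝ) := by
    have hc : ∀ (s : Finset (Σ _ : Fin t, Fin d)),
        ∑ v : (Σ _ : Fin t, Fin d), (if v ∈ s then (1:ℝ) else 0) = (s.card : ℝ) := by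
      intro s
      rw [Finset.sum_boole, Finset.filter_univ_mem]
    rw [Finset.sum_congr rfl (fun k (_ : k ∈ univ) => (hc (clq k)).symm), Finset.sum_comm]
    refine Finset.sum_congr rfl fun v _ => ?_
    rw [Finset.sum_boole]
  -- sum of σ over P
  have σsum : ∑ p ∈ P, (σ p : ℝ)
      = 2 * ((d:ℝ) - 1) * ∑ v : (Σ _ : Fin t, Fin d), ((S v).card : ℝ) := by
    rw [hP, Finset.sum_product]
    have hpart : ∀ i : Fin t, ∑ q ∈ (univ : Finset (Fin d)).offDiag, ((σ (i, q) : ℕ) : ℝ)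
        = 2 * ((d:ℝ) - 1) * ∑ a : Fin d, ((S ⟨i,a⟩).card : ℝ) := by
      intro i
      have : ∀ q : Fin d × Fin d, ((σ (i, q) : ℕ) : ℝ)
          = ((S ⟨i,q.1⟩).card : ℝ) + ((S ⟨i,q.2⟩).card : ℝ) := by
        intro q; simp [hσ]
      rw [Finset.sum_congr rfl (fun q _ => this q)]
      rw [sum_offDiag_helper (fun a b => ((S ⟨i,a⟩).card : ℝ) + ((S ⟨i,b⟩).card : ℝ))]
      simp only [Finset.sum_add_distrib, Finset.sum_const, Finset.card_univ,
        Fintype.card_fin, nsmul_eq_mul, ← Finset.mul_sum]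
      ring
    rw [Finset.sum_congr rfl (fun i _ => hpart i), ← Finset.mul_sum]
    congr 1
    rw [← Finset.univ_sigma_univ, Finset.sum_sigma]
  -- cardinality of P
  have hdd : d ≤ d * d := Nat.le_mul_of_pos_left d (by omega)
  have cardP : (P.card : ℝ) = (t : ℝ) * ((d:ℝ) * ((d:ℝ) - 1)) := by
    rw [hP, Finset.card_product, Finset.offDiag_card, Finset.card_univ, Finset.card_univ,
      Fintype.card_fin, Fintype.card_fin]
    push_cast [Nat.cast_sub hdd]
    ring
  have hPne : P.Nonempty := by
    apply Finset.card_pos.mp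
    rw [hP, Finset.card_product, Finset.offDiag_card, Finset.card_univ, Finset.card_univ,
      Fintype.card_fin, Fintype.card_fin]
    have h1 : 2 * d ≤ d * d := Nat.mul_le_mul_right d hd
    have h2 : 0 < t := by omega
    apply Nat.mul_pos h2
    omega
  -- apply entropy bound
  have hM : (0:ℝ) < (d:ℝ)^2/4 := by positivity
  have hE := entropy_bound P σ ((d:ℝ)^2/4) hM hPne L3
  rw [σsum, cardP] at hE
  set W : ℝ := ∑ v : (Σ _ : Fin t, Fin d), ((S v).card : ℝ) with hWdef
  have hdR : (2:ℝ) ≤ (d:ℝ) := by exact_mod_cast hd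
  have htR : (2:ℝ) ≤ (t:ℝ) := by exact_mod_cast ht
  have hd1 : (0:ℝ) < (d:ℝ) - 1 := by linarith
  have hlog2 : (0:ℝ) < Real.log 2 := Real.log_pos one_lt_two
  have hlogt : Real.log (t:ℝ)
      ≤ Real.log (((t:ℝ) * ((d:ℝ) * ((d:ℝ) - 1))) / ((d:ℝ)^2/4)) := by
    apply Real.log_le_log (by positivity)
    rw [le_div_iff₀ (by positivity)]
    nlinarith
  have hlogtnn : (0:ℝ) ≤ Real.log (t:ℝ) := Real.log_nonneg (by linarith)
  have step1 : (t:ℝ) * ((d:ℝ) * ((d:ℝ) - 1)) * Real.log (t:ℝ)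
      ≤ (t:ℝ) * ((d:ℝ) * ((d:ℝ) - 1)) * Real.log
          (((t:ℝ) * ((d:ℝ) * ((d:ℝ) - 1))) / ((d:ℝ)^2/4)) :=
    mul_le_mul_of_nonneg_left hlogt (by nlinarith)
  have H'' : ((d:ℝ) - 1) * ((d:ℝ) * (t:ℝ) * Real.log (t:ℝ))
      ≤ ((d:ℝ) - 1) * (2 * W * Real.log 2) := by
    have e1 : ((d:ℝ) - 1) * ((d:ℝ) * (t:ℝ) * Real.log (t:ℝ))
        = (t:ℝ) * ((d:ℝ) * ((d:ℝ) - 1)) * Real.log (t:ℝ) := by ring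
    rw [e1]
    refine step1.trans (le_trans hE (le_of_eq (by ring)))
  have h2W : (d:ℝ) * (t:ℝ) * Real.log (t:ℝ) ≤ 2 * W * Real.log 2 :=
    le_of_mul_le_mul_left H'' hd1
  rw [Wsum]
  have hfin : (d:ℝ)/2 * (t:ℝ) * Real.logb 2 (t:ℝ)
      = ((d:ℝ) * (t:ℝ) * Real.log (t:ℝ)) / (2 * Real.log 2) := by
    rw [Real.logb]
    ring
  rw [hfin, div_le_iff₀ (by positivity)]
  nlinarith


lemma main_bound (d t : ℕ) (hd : 2 ≤ d) (ht : 2 ≤ t)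
    (C : Multiset (Finset (Σ _ : Fin t, Fin d)))
    (h1 : ∀ c ∈ C, (Ktd t d).IsClique (c : Set (Σ _ : Fin t, Fin d)))
    (h2 : ∀ u v, (Ktd t d).Adj u v → ∃ c ∈ C, u ∈ c ∧ v ∈ c) :
    (d : ℝ)/2 * t * Real.logb 2 t ≤ ((C.map Finset.card).sum : ℝ) := by
  classical
  set l := C.toList with hl
  have hCl : C = (l : Multiset (Finset (Σ _ : Fin t, Fin d))) := (Multiset.coe_toList C).symm
  have hsum : (C.map Finset.card).sum = ∑ k : Fin l.length, (l.get k).card := by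
    rw [hCl, Multiset.map_coe, Multiset.sum_coe]
    have hmap : l.map Finset.card = List.ofFn (fun k => (l.get k).card) := by
      conv_lhs => rw [← List.ofFn_get l, List.map_ofFn]
      rfl
    rw [hmap, List.sum_ofFn]
  have hsumR : ((C.map Finset.card).sum : ℝ) = ∑ k : Fin l.length, ((l.get k).card : ℝ) := by
    rw [hsum]; push_cast; rfl
  rw [hsumR]
  apply main_indexed d t l.length hd ht (fun k => l.get k)
  · intro k
    exact h1 _ (hCl ▸ Multiset.mem_coe.mpr (l.get_mem _))
  · intro u v hadj
    obtain ⟨c, hcC, hu, hv⟩ := h2 u v hadj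
    rw [hCl] at hcC
    obtain ⟨k, hk⟩ := List.mem_iff_get.mp (Multiset.mem_coe.mp hcC)
    exact ⟨k, hk ▸ hu, hk ▸ hv⟩

/-- **Theorem (lower bound).** For all `d ≥ 2` and `t ≥ 2`,
`scc(K_t(d)) ≥ (d/2) · t · log₂ t`. -/
theorem stmt3 (d t : ℕ) (hd : 2 ≤ d) (ht : 2 ≤ t) :
    (d : ℝ) / 2 * t * Real.logb 2 t ≤ (sigmaCliqueCover (Ktd t d) : ℝ) := by
  classical
  have hne : {w : ℕ | ∃ C : Multiset (Finset (Σ _ : Fin t, Fin d)),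
      (∀ c ∈ C, (Ktd t d).IsClique (c : Set (Σ _ : Fin t, Fin d))) ∧
      (∀ u v, (Ktd t d).Adj u v → ∃ c ∈ C, u ∈ c ∧ v ∈ c) ∧
      (C.map Finset.card).sum = w}.Nonempty := by
    refine ⟨_, (univ.filter (fun p : (Σ _ : Fin t, Fin d) × (Σ _ : Fin t, Fin d) =>
        (Ktd t d).Adj p.1 p.2)).val.map (fun p => ({p.1, p.2} : Finset (Σ _ : Fin t, Fin d))),
      ?_, ?_, rfl⟩
    · intro c hc
      obtain ⟨p, hp, rfl⟩ := Multiset.mem_map.mp hc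
      have hadj : (Ktd t d).Adj p.1 p.2 := (Finset.mem_filter.mp hp).2
      rw [Finset.coe_insert, Finset.coe_singleton]
      exact SimpleGraph.isClique_pair.mpr (fun _ => hadj)
    · intro u v hadj
      refine ⟨{u, v}, ?_, ?_, ?_⟩
      · exact Multiset.mem_map.mpr ⟨(u, v), Finset.mem_filter.mpr ⟨mem_univ _, hadj⟩, rfl⟩
      · simp
      · simp
  have hmem := Nat.sInf_mem hne
  obtain ⟨C, hcl, hcov, hs⟩ := hmem
  rw [sigmaCliqueCover, ← hs]
  exact main_bound d t hd ht C hcl hcov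
end

section
/- Let $d \ge 2$ and $t \ge 1$, and let $\{(A_i^1, \ldots, A_i^d) : 1 \le i \le t\}$ be a family of finite sets such that $A_i^j \cap A_{i'}^{j'} = \emptyset$ if and only if $i = i'$ and $j \ne j'$. Let $X := \bigcup_{i=1}^{t} \bigcup_{j=1}^{d} A_i^j$ and for each $i$ let $B_i^d := X \setminus \bigcup_{j=1}^{d-1} A_i^j$. Then for each $i$ the tuple $P_i' := (A_i^1, \ldots, A_i^{d-1}, B_i^d)$ is a $d$-partition of $X$, and the partitions $P_1', \ldots, P_t'$ are pairwise qualitatively independent. -/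
/-- **Theorem.** Let `d ≥ 2`, `t ≥ 1`, and let `{(A i 1, …, A i d) : 1 ≤ i ≤ t}`
be finite sets with `A i j ∩ A i' j' = ∅` iff `i = i'` and `j ≠ j'`. Let
`X := ⋃_{i,j} A i j` and `B i := X \ ⋃_{j=1}^{d-1} A i j`. Then for each `i`
the tuple `P' i := (A i 1, …, A i (d-1), B i)` is a `d`-partition of `X`
(its classes are pairwise disjoint and their union is `X`), and the partitions
`P' 1, …, P' t` are pairwise qualitatively independent. -/
theorem stmt7 {α : Type*} [DecidableEq α] (d t : ℕ) (hd : 2 ≤ d) (ht : 1 ≤ t)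
    (A : Fin t → Fin d → Finset α)
    (hA : ∀ (i i' : Fin t) (j j' : Fin d),
      A i j ∩ A i' j' = ∅ ↔ (i = i' ∧ j ≠ j'))
    (X : Finset α)
    (hX : X = Finset.univ.biUnion fun i : Fin t =>
      Finset.univ.biUnion fun j : Fin d => A i j)
    (B : Fin t → Finset α)
    (hB : ∀ i : Fin t, B i =
      X \ (Finset.univ.biUnion fun j : Fin d =>
        if (j : ℕ) < d - 1 then A i j else ∅))
    (P' : Fin t → Fin d → Finset α)
    (hP' : ∀ (i : Fin t) (j : Fin d),
      P' i j = if (j : ℕ) < d - 1 then A i j else B i) :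
    (∀ i : Fin t,
      (∀ j j' : Fin d, j ≠ j' → P' i j ∩ P' i j' = ∅) ∧
      Finset.univ.biUnion (P' i) = X) ∧
    (∀ i i' : Fin t, i ≠ i' → ∀ j j' : Fin d, (P' i j ∩ P' i' j').Nonempty) := by
  have hd1 : d - 1 < d := by omega
  set last : Fin d := ⟨d - 1, hd1⟩ with hlast
  -- membership in X
  have hmemX : ∀ (i : Fin t) (j : Fin d) (x : α), x ∈ A i j → x ∈ X := by
    intro i j x hx
    rw [hX]
    simp only [Finset.mem_biUnion, Finset.mem_univ, true_and]
    exact ⟨i, j, hx⟩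
  -- disjointness within one i
  have hdisj : ∀ (i : Fin t) (j j' : Fin d), j ≠ j' → ∀ x, x ∈ A i j → x ∉ A i j' := by
    intro i j j' h x hx hx'
    have := (hA i i j j').mpr ⟨rfl, h⟩
    have : x ∈ A i j ∩ A i j' := Finset.mem_inter.mpr ⟨hx, hx'⟩
    rw [(hA i i j j').mpr ⟨rfl, h⟩] at this
    exact absurd this (Finset.notMem_empty x)
  -- nonempty cross intersections
  have hne : ∀ (i i' : Fin t) (j j' : Fin d), i ≠ i' → (A i j ∩ A i' j').Nonempty := by
    intro i i' j j' h
    rw [Finset.nonempty_iff_ne_empty, Ne, hA]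
    tauto
  -- membership in B
  have hBmem : ∀ (i : Fin t) (x : α),
      x ∈ B i ↔ x ∈ X ∧ ∀ j : Fin d, (j : ℕ) < d - 1 → x ∉ A i j := by
    intro i x
    rw [hB, Finset.mem_sdiff]
    simp only [Finset.mem_biUnion, Finset.mem_univ, true_and, not_exists]
    constructor
    · rintro ⟨hx, h2⟩
      refine ⟨hx, fun j hj hxj => h2 j ?_⟩
      rw [if_pos hj]; exact hxj
    · rintro ⟨hx, h2⟩
      refine ⟨hx, fun j hj => ?_⟩
      by_cases hc : (j : ℕ) < d - 1
      · rw [if_pos hc] at hj; exact h2 j hc hj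
      · rw [if_neg hc] at hj; exact Finset.notMem_empty x hj
  have hBsub : ∀ (i : Fin t) (x : α), x ∈ B i → x ∈ X := fun i x hx =>
    ((hBmem i x).mp hx).1
  constructor
  · intro i
    constructor
    · intro j j' hjj'
      rw [hP', hP']
      apply Finset.eq_empty_iff_forall_notMem.mpr
      intro x hx
      rw [Finset.mem_inter] at hx
      obtain ⟨hx1, hx2⟩ := hx
      by_cases h1 : (j : ℕ) < d - 1 <;> by_cases h2 : (j' : ℕ) < d - 1
      · rw [if_pos h1] at hx1; rw [if_pos h2] at hx2
        exact hdisj i j j' hjj' x hx1 hx2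
      · rw [if_pos h1] at hx1; rw [if_neg h2] at hx2
        exact ((hBmem i x).mp hx2).2 j h1 hx1
      · rw [if_neg h1] at hx1; rw [if_pos h2] at hx2
        exact ((hBmem i x).mp hx1).2 j' h2 hx2
      · exact hjj' (Fin.ext (by omega))
    · ext x
      simp only [Finset.mem_biUnion, Finset.mem_univ, true_and]
      constructor
      · rintro ⟨j, hj⟩
        rw [hP'] at hj
        by_cases hc : (j : ℕ) < d - 1
        · rw [if_pos hc] at hj; exact hmemX i j x hj
        · rw [if_neg hc] at hj; exact hBsub i x hj
      · intro hx
        by_cases hc : ∃ j : Fin d, (j : ℕ) < d - 1 ∧ x ∈ A i j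
        · obtain ⟨j, hj, hxj⟩ := hc
          exact ⟨j, by rw [hP', if_pos hj]; exact hxj⟩
        · push_neg at hc
          refine ⟨last, ?_⟩
          rw [hP', if_neg (by simp [hlast])]
          exact (hBmem i x).mpr ⟨hx, hc⟩
  · intro i i' hii' j j'
    have key : ∀ (k : Fin t) (x : α), x ∈ A k last → x ∈ B k := by
      intro k x hx
      refine (hBmem k x).mpr ⟨hmemX k last x hx, fun j hj => ?_⟩
      exact hdisj k last j (by intro h; rw [← h] at hj; simp [hlast] at hj) x hx
    rw [hP', hP']
    by_cases h1 : (j : ℕ) < d - 1 <;> by_cases h2 : (j' : ℕ) < d - 1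
    · rw [if_pos h1, if_pos h2]; exact hne i i' j j' hii'
    · rw [if_pos h1, if_neg h2]
      obtain ⟨x, hx⟩ := hne i i' j last hii'
      rw [Finset.mem_inter] at hx
      exact ⟨x, Finset.mem_inter.mpr ⟨hx.1, key i' x hx.2⟩⟩
    · rw [if_neg h1, if_pos h2]
      obtain ⟨x, hx⟩ := hne i i' last j' hii'
      rw [Finset.mem_inter] at hx
      exact ⟨x, Finset.mem_inter.mpr ⟨key i x hx.1, hx.2⟩⟩
    · rw [if_neg h1, if_neg h2]
      obtain ⟨x, hx⟩ := hne i i' last last hii'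
      rw [Finset.mem_inter] at hx
      exact ⟨x, Finset.mem_inter.mpr ⟨key i x hx.1, key i' x hx.2⟩⟩
end

section
/- Let $d \ge 2$ and $t \ge 1$, and let $\{(A_i^1, \ldots, A_i^d) : 1 \le i \le t\}$ be a family of finite sets such that $A_i^j \cap A_{i'}^{j'} = \emptyset$ if and only if $i = i'$ and $j \ne j'$. Then for any two fixed distinct indices $j \ne j'$ with $1 \le j, j' \le d$, we have $\sum_{i=1}^{t} \binom{|A_i^j| + |A_i^{j'}|}{|A_i^j|}^{-1} \le 1$. -/
open Finset

private lemma choose_pos_real (a b : ℕ) : (0:ℝ) < ((a + b).choose a : ℝ) := by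
  exact_mod_cast Nat.choose_pos (Nat.le_add_right a b)

private lemma bol_arith (N b' c : ℕ) (hbc : b' + 1 + c ≤ N) :
    ((N - c - (b' + 1) : ℕ) : ℝ) * (((b' + 1) + c).choose (b' + 1) : ℝ)⁻¹
      + ((b' + 1 : ℕ) : ℝ) * ((b' + c).choose b' : ℝ)⁻¹
    = (N : ℝ) * (((b' + 1) + c).choose (b' + 1) : ℝ)⁻¹ := by
  have hp1 : (0:ℝ) < ((b' + c).choose b' : ℝ) := choose_pos_real b' c
  have hp2 : (0:ℝ) < ((b' + 1 + c).choose (b' + 1) : ℝ) := choose_pos_real (b' + 1) c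
  have hcast : ((N - c - (b' + 1) : ℕ) : ℝ) = (N : ℝ) - c - (b' + 1) := by
    have h' : (N - c - (b' + 1) : ℕ) = N - (c + (b' + 1)) := by omega
    rw [h', Nat.cast_sub (by omega)]
    push_cast
    ring
  have hid : ((b' + c + 1 : ℕ) : ℝ) * ((b' + c).choose b' : ℝ)
      = ((b' + 1 + c).choose (b' + 1) : ℝ) * ((b' + 1 : ℕ) : ℝ) := by
    have harr : b' + 1 + c = (b' + c) + 1 := by omega
    rw [harr]
    exact_mod_cast Nat.add_one_mul_choose_eq (b' + c) b'
  rw [hcast]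
  field_simp
  push_cast at hid ⊢
  nlinarith [hid, hp1, hp2]

/-- The classical Bollobás set-pair inequality. -/
private lemma bollobas {ι α : Type*} [DecidableEq α] [DecidableEq ι] :
    ∀ (n : ℕ) (I : Finset ι) (B C : ι → Finset α),
    (I.biUnion fun i => B i ∪ C i).card ≤ n →
    (∀ i ∈ I, B i ∩ C i = ∅) →
    (∀ i ∈ I, ∀ i' ∈ I, i ≠ i' → (B i ∩ C i').Nonempty) →
    ∑ i ∈ I, (((B i).card + (C i).card).choose (B i).card : ℝ)⁻¹ ≤ 1 := by
  intro n
  induction n with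
  | zero =>
    intro I B C hU h1 h2
    -- small-I case: each term ≤ 1 and |I| ≤ 1
    rcases le_or_gt I.card 1 with hI | hI
    · interval_cases h : I.card
      · rw [card_eq_zero] at h; simp [h]
      · obtain ⟨a, ha⟩ := card_eq_one.mp h
        rw [ha, sum_singleton]
        rw [inv_le_one_iff₀]
        right
        exact_mod_cast Nat.one_le_iff_ne_zero.mpr (Nat.choose_pos (Nat.le_add_right _ _)).ne'
    · obtain ⟨i, hi⟩ : I.Nonempty := card_pos.mp (by omega)
      obtain ⟨i', hi', hne⟩ := exists_mem_ne hI i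
      obtain ⟨x, hx⟩ := h2 i hi i' hi' (Ne.symm hne)
      have : x ∈ I.biUnion fun i => B i ∪ C i := by
        refine mem_biUnion.mpr ⟨i, hi, ?_⟩
        exact mem_union_left _ (mem_inter.mp hx).1
      have := card_pos.mpr ⟨x, this⟩
      omega
  | succ n IH =>
    intro I B C hU h1 h2
    rcases le_or_gt I.card 1 with hI | hI
    · interval_cases h : I.card
      · rw [card_eq_zero] at h; simp [h]
      · obtain ⟨a, ha⟩ := card_eq_one.mp h
        rw [ha, sum_singleton]
        rw [inv_le_one_iff₀]
        right
        exact_mod_cast Nat.one_le_iff_ne_zero.mpr (Nat.choose_pos (Nat.le_add_right _ _)).ne'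
    set U : Finset α := I.biUnion fun i => B i ∪ C i with hUdef
    have hBU : ∀ i ∈ I, B i ⊆ U := fun i hi =>
      (subset_union_left).trans (subset_biUnion_of_mem (fun i => B i ∪ C i) hi)
    have hCU : ∀ i ∈ I, C i ⊆ U := fun i hi =>
      (subset_union_right).trans (subset_biUnion_of_mem (fun i => B i ∪ C i) hi)
    have hBne : ∀ i ∈ I, (B i).Nonempty := by
      intro i hi
      obtain ⟨i', hi', hne⟩ := exists_mem_ne hI i
      obtain ⟨x, hx⟩ := h2 i hi i' hi' (Ne.symm hne)
      exact ⟨x, (mem_inter.mp hx).1⟩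
    have hUne : U.Nonempty := by
      obtain ⟨i, hi⟩ : I.Nonempty := card_pos.mp (by omega)
      obtain ⟨x, hx⟩ := hBne i hi
      exact ⟨x, hBU i hi hx⟩
    -- the per-x inner sum
    set u : ι → α → ℝ := fun i x =>
      (((B i \ {x}).card + (C i).card).choose (B i \ {x}).card : ℝ)⁻¹ with hu
    set t : ι → ℝ := fun i =>
      (((B i).card + (C i).card).choose (B i).card : ℝ)⁻¹ with ht
    -- induction hypothesis gives, for each x ∈ U:
    have hsub : ∀ x ∈ U, ∑ i ∈ I.filter (fun i => x ∉ C i), u i x ≤ 1 := by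
      intro x hxU
      refine IH (I.filter fun i => x ∉ C i) (fun i => B i \ {x}) C ?_ ?_ ?_
      · refine le_trans (card_le_card (t := U.erase x) ?_) ?_
        · intro y hy
          obtain ⟨i, hi, hyi⟩ := mem_biUnion.mp hy
          have hiI := mem_filter.mp hi
          simp only [mem_union, mem_sdiff, mem_singleton] at hyi
          rcases hyi with ⟨hyB, hyx⟩ | hyC
          · exact mem_erase.mpr ⟨hyx, hBU i hiI.1 hyB⟩
          · refine mem_erase.mpr ⟨?_, hCU i hiI.1 hyC⟩
            rintro rfl; exact hiI.2 hyC
        · rw [card_erase_of_mem hxU]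
          omega
      · intro i hi
        have hiI := (mem_filter.mp hi).1
        refine subset_empty.mp ?_
        rw [← h1 i hiI]
        exact inter_subset_inter sdiff_subset le_rfl
      · intro i hi i' hi' hne
        obtain ⟨y, hy⟩ := h2 i (mem_filter.mp hi).1 i' (mem_filter.mp hi').1 hne
        have hy' := mem_inter.mp hy
        refine ⟨y, mem_inter.mpr ⟨mem_sdiff.mpr ⟨hy'.1, ?_⟩, hy'.2⟩⟩
        simp only [mem_singleton]
        rintro rfl
        exact (mem_filter.mp hi').2 hy'.2
    -- key identity: for i ∈ I, summing u over admissible x gives |U| * t i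
    have key : ∀ i ∈ I, ∑ x ∈ U.filter (fun x => x ∉ C i), u i x = (U.card : ℝ) * t i := by
      intro i hi
      set b := (B i).card with hb
      set c := (C i).card with hc
      have hb1 : 1 ≤ b := card_pos.mpr (hBne i hi)
      set F := U.filter (fun x => x ∉ C i) with hF
      have hBF : B i ⊆ F := by
        intro x hx
        refine mem_filter.mpr ⟨hBU i hi hx, fun hxC => ?_⟩
        have : x ∈ B i ∩ C i := mem_inter.mpr ⟨hx, hxC⟩
        rw [h1 i hi] at this
        exact absurd this (notMem_empty x)
      have hFcard : F.card = U.card - c := by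
        rw [hF, filter_not, card_sdiff_of_subset (filter_subset _ _)]
        congr 1
        rw [filter_mem_eq_inter, inter_eq_right.mpr (hCU i hi)]
      have hbc : b + c ≤ U.card := by
        have h' : (B i ∪ C i).card ≤ U.card :=
          card_le_card (union_subset (hBU i hi) (hCU i hi))
        have hdisj : Disjoint (B i) (C i) := disjoint_iff_inter_eq_empty.mpr (h1 i hi)
        rw [card_union_of_disjoint hdisj] at h'
        omega
      have hsplit : ∑ x ∈ F, u i x = ∑ x ∈ F \ B i, u i x + ∑ x ∈ B i, u i x :=
        (sum_sdiff hBF).symm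
      have hval1 : ∀ x ∈ B i, u i x = (((b - 1) + c).choose (b - 1) : ℝ)⁻¹ := by
        intro x hx
        have hcd : (B i \ {x}).card = b - 1 := by
          rw [sdiff_singleton_eq_erase, card_erase_of_mem hx]
        simp only [hu, hcd, ← hc]
      have hval2 : ∀ x ∈ F \ B i, u i x = t i := by
        intro x hx
        have hxB : x ∉ B i := (mem_sdiff.mp hx).2
        have hBx : B i \ {x} = B i := by
          rw [sdiff_singleton_eq_erase, erase_eq_of_notMem hxB]
        simp only [hu, ht, hBx]
      rw [hsplit, sum_congr rfl hval2, sum_congr rfl hval1, sum_const, sum_const,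
        card_sdiff_of_subset hBF, hFcard, nsmul_eq_mul, nsmul_eq_mul]
      simp only [ht]
      have := bol_arith U.card (b - 1) c (by omega)
      have hb'' : b - 1 + 1 = b := by omega
      rw [hb''] at this
      exact this
    have hpos : (0:ℝ) < (U.card : ℝ) := by exact_mod_cast card_pos.mpr hUne
    rw [← mul_le_mul_iff_of_pos_left hpos]
    calc (U.card : ℝ) * ∑ i ∈ I, t i
        = ∑ i ∈ I, (U.card : ℝ) * t i := mul_sum _ _ _
      _ = ∑ i ∈ I, ∑ x ∈ U.filter (fun x => x ∉ C i), u i x :=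
          sum_congr rfl fun i hi => (key i hi).symm
      _ = ∑ i ∈ I, ∑ x ∈ U, if x ∉ C i then u i x else 0 :=
          sum_congr rfl fun i _ => (sum_filter _ _)
      _ = ∑ x ∈ U, ∑ i ∈ I, if x ∉ C i then u i x else 0 := sum_comm
      _ = ∑ x ∈ U, ∑ i ∈ I.filter (fun i => x ∉ C i), u i x :=
          sum_congr rfl fun x _ => (sum_filter _ _).symm
      _ ≤ ∑ x ∈ U, 1 := sum_le_sum hsub
      _ = (U.card : ℝ) := by simp
      _ = (U.card : ℝ) * 1 := (mul_one _).symm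

/-- **Theorem (Bollobás inequality for two columns).** Let `d ≥ 2`, `t ≥ 1`, and
let `{(A i 1, …, A i d) : 1 ≤ i ≤ t}` be finite sets with
`A i j ∩ A i' j' = ∅` iff `i = i'` and `j ≠ j'`. Then for any two distinct
column indices `j ≠ j'` we have
`∑_{i=1}^{t} C(|A i j| + |A i j'|, |A i j|)⁻¹ ≤ 1`. -/
theorem stmt8 {α : Type*} [DecidableEq α] (d t : ℕ) (hd : 2 ≤ d) (ht : 1 ≤ t)
    (A : Fin t → Fin d → Finset α)
    (hA : ∀ (i i' : Fin t) (j j' : Fin d),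
      A i j ∩ A i' j' = ∅ ↔ (i = i' ∧ j ≠ j'))
    (j j' : Fin d) (hjj' : j ≠ j') :
    ∑ i : Fin t,
      ((Nat.choose ((A i j).card + (A i j').card) ((A i j).card) : ℝ))⁻¹ ≤ 1 := by
  have := bollobas (ι := Fin t) (α := α)
    ((Finset.univ.biUnion fun i => A i j ∪ A i j').card)
    Finset.univ (fun i => A i j) (fun i => A i j') le_rfl
    (fun i _ => (hA i i j j').mpr ⟨rfl, hjj'⟩)
    (fun i _ i' _ hne => by
      rw [Finset.nonempty_iff_ne_empty]
      intro h
      exact hne ((hA i i' j j').mp h).1)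
  simpa using this
end

section
/- Let $d \ge 2$ and $t \ge 1$, and let $\{(A_i^1, \ldots, A_i^d) : 1 \le i \le t\}$ be a family of finite sets such that $A_i^j \cap A_{i'}^{j'} = \emptyset$ if and only if $i = i'$ and $j \ne j'$. Writing $k_{i,j} := |A_i^j|$ and setting $k_{i,d+1} := k_{i,1}$, we have $\sum_{j=1}^{d} \sum_{i=1}^{t} 2^{-(k_{i,j} + k_{i,j+1})} \le d$. -/
open Finset

lemma weak_bollobas {α : Type*} [DecidableEq α] {t : ℕ} (B C : Fin t → Finset α)
    (hdisj : ∀ i, Disjoint (B i) (C i))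
    (hc : ∀ i i', i ≠ i' → (B i ∩ C i').Nonempty) :
    ∑ i, ((2:ℝ) ^ ((B i).card + (C i).card))⁻¹ ≤ 1 := by
  classical
  set X : Finset α := Finset.univ.biUnion (fun i => B i ∪ C i) with hX
  have hBX : ∀ i, B i ⊆ X := fun i => (Finset.subset_union_left).trans
    (Finset.subset_biUnion_of_mem (fun i => B i ∪ C i) (Finset.mem_univ i))
  have hCX : ∀ i, C i ⊆ X := fun i => (Finset.subset_union_right).trans
    (Finset.subset_biUnion_of_mem (fun i => B i ∪ C i) (Finset.mem_univ i))
  set F : Fin t → Finset (Finset α) :=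
    fun i => ((X \ (B i ∪ C i)).powerset).image (fun S => S ∪ B i) with hF
  have hSdisj : ∀ i (S : Finset α), S ∈ (X \ (B i ∪ C i)).powerset →
      Disjoint S (B i ∪ C i) := by
    intro i S hS
    rw [Finset.mem_powerset] at hS
    exact Finset.disjoint_of_subset_left hS Finset.sdiff_disjoint
  have hcard : ∀ i, (F i).card = 2 ^ (X.card - ((B i).card + (C i).card)) := by
    intro i
    rw [hF]
    simp only
    rw [Finset.card_image_of_injOn, Finset.card_powerset, Finset.card_sdiff_of_subset
      (Finset.union_subset (hBX i) (hCX i)), Finset.card_union_of_disjoint (hdisj i)]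
    intro S hS S' hS' h
    simp only [Finset.mem_coe] at hS hS'
    have h1 : Disjoint S (B i) :=
      (hSdisj i S hS).mono_right Finset.subset_union_left
    have h2 : Disjoint S' (B i) :=
      (hSdisj i S' hS').mono_right Finset.subset_union_left
    have : (S ∪ B i) \ B i = (S' ∪ B i) \ B i := by
      simpa using congrArg (fun T => T \ B i) h
    rwa [Finset.union_sdiff_cancel_right h1, Finset.union_sdiff_cancel_right h2] at this
  have hmem : ∀ i T, T ∈ F i → B i ⊆ T ∧ Disjoint T (C i) ∧ T ⊆ X := by
    intro i T hT
    rw [hF] at hT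
    simp only [Finset.mem_image] at hT
    obtain ⟨S, hS, rfl⟩ := hT
    refine ⟨Finset.subset_union_right, ?_, ?_⟩
    · exact Finset.disjoint_union_left.mpr
        ⟨(hSdisj i S hS).mono_right Finset.subset_union_right, hdisj i⟩
    · rw [Finset.mem_powerset] at hS
      exact Finset.union_subset (hS.trans (Finset.sdiff_subset)) (hBX i)
  have hpd : ∀ i ∈ (Finset.univ : Finset (Fin t)), ∀ i' ∈ Finset.univ,
      i ≠ i' → Disjoint (F i) (F i') := by
    intro i _ i' _ hne
    rw [Finset.disjoint_left]
    intro T hT hT'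
    obtain ⟨x, hx⟩ := hc i i' hne
    rw [Finset.mem_inter] at hx
    exact (Finset.disjoint_left.mp (hmem i' T hT').2.1) ((hmem i T hT).1 hx.1) hx.2
  have hsum : ∑ i, (F i).card ≤ 2 ^ X.card := by
    rw [← Finset.card_biUnion hpd, ← Finset.card_powerset]
    apply Finset.card_le_card
    intro T hT
    rw [Finset.mem_biUnion] at hT
    obtain ⟨i, _, hT⟩ := hT
    exact Finset.mem_powerset.mpr (hmem i T hT).2.2
  have hle : ∀ i, (B i).card + (C i).card ≤ X.card := by
    intro i
    rw [← Finset.card_union_of_disjoint (hdisj i)]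
    exact Finset.card_le_card (Finset.union_subset (hBX i) (hCX i))
  have key : ∀ i, ((2:ℝ) ^ ((B i).card + (C i).card))⁻¹
      = (2:ℝ) ^ (X.card - ((B i).card + (C i).card)) / 2 ^ X.card := by
    intro i
    have hmul : (2:ℝ) ^ (X.card - ((B i).card + (C i).card))
        * 2 ^ ((B i).card + (C i).card) = 2 ^ X.card := by
      rw [← pow_add]; congr 1; have := hle i; omega
    field_simp
    linarith [hmul]
  calc ∑ i, ((2:ℝ) ^ ((B i).card + (C i).card))⁻¹
      = (∑ i, (2:ℝ) ^ (X.card - ((B i).card + (C i).card))) / 2 ^ X.card := by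
        rw [Finset.sum_div]; exact Finset.sum_congr rfl fun i _ => key i
    _ ≤ (2:ℝ) ^ X.card / 2 ^ X.card := by
        gcongr
        have h2 : ∑ i, 2 ^ (X.card - ((B i).card + (C i).card)) ≤ 2 ^ X.card := by
          simpa only [hcard] using hsum
        exact_mod_cast h2
    _ = 1 := div_self (by positivity)



/-- **Theorem.** Let `d ≥ 2`, `t ≥ 1`, and let `{(A i 1, …, A i d) : 1 ≤ i ≤ t}`
be finite sets with `A i j ∩ A i' j' = ∅` iff `i = i'` and `j ≠ j'`. Writing
`k i j := |A i j|` and interpreting the column index cyclically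
(`k i (d+1) := k i 1`), we have
`∑_{j=1}^{d} ∑_{i=1}^{t} 2^{-(k i j + k i (j+1))} ≤ d`. -/
theorem stmt10 {α : Type*} [DecidableEq α] (d t : ℕ) (hd : 2 ≤ d) (ht : 1 ≤ t)
    (A : Fin t → Fin d → Finset α)
    (hA : ∀ (i i' : Fin t) (j j' : Fin d),
      A i j ∩ A i' j' = ∅ ↔ (i = i' ∧ j ≠ j')) :
    ∑ j : Fin d, ∑ i : Fin t,
      ((2 : ℝ) ^
        ((A i j).card +
          (A i ⟨((j : ℕ) + 1) % d, Nat.mod_lt _ (by omega)⟩).card))⁻¹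
      ≤ (d : ℝ) := by
  have step : ∀ j : Fin d, ∑ i : Fin t,
      ((2 : ℝ) ^
        ((A i j).card +
          (A i ⟨((j : ℕ) + 1) % d, Nat.mod_lt _ (by omega)⟩).card))⁻¹ ≤ 1 := by
    intro j
    set j' : Fin d := ⟨((j : ℕ) + 1) % d, Nat.mod_lt _ (by omega)⟩ with hj'
    have hjne : j ≠ j' := by
      intro h
      have hv : (j : ℕ) = ((j : ℕ) + 1) % d := congrArg Fin.val h
      have hjd : (j : ℕ) < d := j.isLt
      rcases Nat.lt_or_ge ((j : ℕ) + 1) d with h1 | h1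
      · rw [Nat.mod_eq_of_lt h1] at hv; omega
      · have : (j : ℕ) + 1 = d := by omega
        rw [this, Nat.mod_self] at hv; omega
    exact weak_bollobas (fun i => A i j) (fun i => A i j')
      (fun i => Finset.disjoint_iff_inter_eq_empty.mpr
        ((hA i i j j').mpr ⟨rfl, hjne⟩))
      (fun i i' hne => Finset.nonempty_iff_ne_empty.mpr
        (fun h => hne ((hA i i' j j').mp h).1))
  calc ∑ j : Fin d, ∑ i : Fin t,
      ((2 : ℝ) ^
        ((A i j).card +
          (A i ⟨((j : ℕ) + 1) % d, Nat.mod_lt _ (by omega)⟩).card))⁻¹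
      ≤ ∑ j : Fin d, (1 : ℝ) := Finset.sum_le_sum fun j _ => step j
    _ = (d : ℝ) := by simp
end

section
/- Let $n$ and $d$ be positive integers with $n \ge 2d$, and let $G$ be a complete multipartite graph on $n$ vertices with at least two parts of size $d$ and all other parts of size at most $d$ (and every part nonempty). Then $scc(G) \ge nd$. -/
private lemma sccAux_sum_card_eq {α : Type*} [Fintype α] [DecidableEq α]
    (C : Multiset (Finset α)) :
    (C.map Finset.card).sum
      = ∑ v : α, Multiset.card (C.filter (fun c => v ∈ c)) := by
  induction C using Multiset.induction with
  | empty => simp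
  | cons c C ih =>
    have hc : c.card = ∑ v : α, (if v ∈ c then 1 else 0) := by
      rw [← Finset.card_filter]
      congr 1
      ext x
      simp
    simp only [Multiset.map_cons, Multiset.sum_cons, Multiset.filter_cons]
    rw [ih, hc, ← Finset.sum_add_distrib]
    refine Finset.sum_congr rfl fun v _ => ?_
    by_cases h : v ∈ c <;> simp [h, Nat.add_comm]

/-- **Theorem (Davoodi–Javadi–Omoomi, lower bound).** Let `n ≥ 2d` (with
`d ≥ 1`) and let `G` be a complete multipartite graph on `n` vertices with at
least two parts of size `d`, every part nonempty, and all parts of size at most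
`d`. Then `scc(G) ≥ n·d`. -/
theorem stmt12 {ι : Type*} [Fintype ι] (V : ι → Type*) [∀ i, Fintype (V i)]
    (n d : ℕ) (hd : 1 ≤ d) (hn : 2 * d ≤ n)
    (hcard : Fintype.card (Σ i, V i) = n)
    (htwo : ∃ a b : ι, a ≠ b ∧ Fintype.card (V a) = d ∧ Fintype.card (V b) = d)
    (hparts : ∀ c : ι, 1 ≤ Fintype.card (V c) ∧ Fintype.card (V c) ≤ d) :
    n * d ≤ sigmaCliqueCover (SimpleGraph.completeMultipartiteGraph V) := by
  classical
  set G := SimpleGraph.completeMultipartiteGraph V with hG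
  apply le_csInf
  · -- the set is nonempty: take all cliques
    refine ⟨_, (Finset.univ.filter
      (fun c : Finset (Σ i, V i) => G.IsClique (c : Set (Σ i, V i)))).val, ?_, ?_, rfl⟩
    · intro c hc
      exact (Finset.mem_filter.mp hc).2
    · intro u v huv
      refine ⟨{u, v}, ?_, by simp, by simp⟩
      rw [Finset.mem_val, Finset.mem_filter]
      refine ⟨Finset.mem_univ _, ?_⟩
      have : ((({u, v} : Finset (Σ i, V i)) : Set (Σ i, V i))) = {u, v} := by simp
      rw [this, SimpleGraph.isClique_pair]
      exact fun _ => huv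
  · rintro w ⟨C, hclique, hcover, rfl⟩
    -- per-vertex bound
    have key : ∀ v : Σ i, V i, d ≤ Multiset.card (C.filter (fun c => v ∈ c)) := by
      intro v
      obtain ⟨a, b, hab, ha, hb⟩ := htwo
      obtain ⟨j, hj1, hj2⟩ : ∃ j, v.1 ≠ j ∧ Fintype.card (V j) = d := by
        by_cases h : v.1 = a
        · exact ⟨b, by rw [h]; exact hab, hb⟩
        · exact ⟨a, h, ha⟩
      have hadj : ∀ x : V j, G.Adj v ⟨j, x⟩ := fun x => hj1
      have hex : ∀ x : V j, ∃ c, c ∈ C.filter (fun c => v ∈ c) ∧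
          (⟨j, x⟩ : Σ i, V i) ∈ c := by
        intro x
        obtain ⟨c, hc, hvc, hxc⟩ := hcover v ⟨j, x⟩ (hadj x)
        exact ⟨c, Multiset.mem_filter.mpr ⟨hc, hvc⟩, hxc⟩
      choose F hF1 hF2 using hex
      have hinj : Function.Injective F := by
        intro x y hxy
        by_contra hne
        have hFC : F x ∈ C := Multiset.mem_of_mem_filter (hF1 x)
        have hcl := hclique (F x) hFC
        have hyx : (⟨j, y⟩ : Σ i, V i) ∈ F x := by rw [hxy]; exact hF2 y
        have hadj2 : G.Adj ⟨j, x⟩ ⟨j, y⟩ := by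
          refine hcl ?_ ?_ ?_
          · exact_mod_cast hF2 x
          · exact_mod_cast hyx
          · simp [hne]
        exact hadj2 rfl
      calc d = Fintype.card (V j) := hj2.symm
        _ = (Finset.univ : Finset (V j)).card := rfl
        _ ≤ (C.filter (fun c => v ∈ c)).toFinset.card := by
            refine Finset.card_le_card_of_injOn F ?_ hinj.injOn
            intro x _
            exact Multiset.mem_toFinset.mpr (hF1 x)
        _ ≤ Multiset.card (C.filter (fun c => v ∈ c)) := Multiset.toFinset_card_le _
    rw [sccAux_sum_card_eq C]
    calc n * d = ∑ _v : Σ i, V i, d := by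
          rw [Finset.sum_const, Finset.card_univ, hcard, smul_eq_mul]
      _ ≤ _ := Finset.sum_le_sum fun v _ => key v
end

section
/- For every real constant $c > 0$ there exist an integer $d \ge 2$ and $t_0$ such that for every integer $t \ge t_0$ there is a family $\{(A_i^1, \ldots, A_i^d) : 1 \le i \le t\}$ of finite sets with the property that $A_i^j \cap A_{i'}^{j'} = \emptyset$ if and only if $i = i'$ and $j \ne j'$, and with $\sum_{i=1}^{t} \sum_{j=1}^{d} |A_i^j| < c\, d^2\, t \log_2 t$. (In particular, there is no constant $c > 0$ and function $f$ such that every such family with $d \ge 2$ and $t \ge f(d)$ has total size at least $c\, d^2\, t \log_2 t$.) -/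
/-- Encoding of triples `(k, s, u)` with `s, u < d` into `ℕ`. -/
def stmt13enc (d k s u : ℕ) : ℕ := (k * d + s) * d + u

lemma stmt13enc_inj {d k s u k' s' u' : ℕ} (hs : s < d) (hu : u < d)
    (hs' : s' < d) (hu' : u' < d) (h : stmt13enc d k s u = stmt13enc d k' s' u') :
    k = k' ∧ s = s' ∧ u = u' := by
  have hd : 0 < d := lt_of_le_of_lt (Nat.zero_le _) hu
  have key : ∀ a b : ℕ, b < d → ((a * d + b) % d = b ∧ (a * d + b) / d = a) := by
    intro a b hb
    constructor
    · rw [Nat.mul_comm, Nat.mul_add_mod, Nat.mod_eq_of_lt hb]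
    · rw [Nat.mul_comm, Nat.mul_add_div hd, Nat.div_eq_of_lt hb, Nat.add_zero]
  unfold stmt13enc at h
  have h1 : u = u' := by
    have h' : ((k * d + s) * d + u) % d = ((k' * d + s') * d + u') % d := by rw [h]
    rwa [(key _ _ hu).1, (key _ _ hu').1] at h'
  have h2 : k * d + s = k' * d + s' := by
    have h' : ((k * d + s) * d + u) / d = ((k' * d + s') * d + u') / d := by rw [h]
    rwa [(key _ _ hu).2, (key _ _ hu').2] at h'
  have h3 : s = s' := by
    have h' : (k * d + s) % d = (k' * d + s') % d := by rw [h2]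
    rwa [(key _ _ hs).1, (key _ _ hs').1] at h'
  have h4 : k = k' := by
    have h' : (k * d + s) / d = (k' * d + s') / d := by rw [h2]
    rwa [(key _ _ hs).2, (key _ _ hs').2] at h'
  exact ⟨h4, h3, h1⟩

/-- Numbers below `d ^ m` are determined by their base-`d` digits. -/
lemma stmt13dig_unique {d : ℕ} (hd : 1 < d) :
    ∀ m : ℕ, ∀ i < d ^ m, ∀ i' < d ^ m,
      (∀ k < m, i / d ^ k % d = i' / d ^ k % d) → i = i' := by
  intro m
  induction m with
  | zero =>
    intro i hi i' hi' _
    simp only [pow_zero, Nat.lt_one_iff] at hi hi'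
    omega
  | succ m ih =>
    intro i hi i' hi' h
    have hd0 : 0 < d := by omega
    have h0 : i % d = i' % d := by simpa using h 0 (Nat.succ_pos m)
    have hdig : ∀ j : ℕ, ∀ k < m, j / d / d ^ k % d = j / d ^ (k + 1) % d := by
      intro j k _
      rw [Nat.div_div_eq_div_mul, ← pow_succ']
    have hlt : ∀ j : ℕ, j < d ^ (m + 1) → j / d < d ^ m := by
      intro j hj
      rw [Nat.div_lt_iff_lt_mul hd0]
      calc j < d ^ (m + 1) := hj
        _ = d ^ m * d := pow_succ d m
    have hdiv : i / d = i' / d := by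
      apply ih (i / d) (hlt i hi) (i' / d) (hlt i' hi')
      intro k hk
      rw [hdig i k hk, hdig i' k hk]
      exact h (k + 1) (by omega)
    have e1 := Nat.div_add_mod i d
    have e2 := Nat.div_add_mod i' d
    rw [hdiv] at e1
    omega

/-- **Theorem (disproof of the Davoodi–Javadi–Omoomi conjecture).** For every
real constant `c > 0` there exist an integer `d ≥ 2` and `t₀` such that for
every `t ≥ t₀` there is a family of finite sets `{(A i 1, …, A i d) : 1 ≤ i ≤ t}`
with `A i j ∩ A i' j' = ∅` iff `i = i'` and `j ≠ j'`, whose total size is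
strictly less than `c · d² · t · log₂ t`. -/
theorem stmt13 (c : ℝ) (hc : 0 < c) :
    ∃ d : ℕ, 2 ≤ d ∧ ∃ t0 : ℕ, ∀ t : ℕ, t0 ≤ t →
      ∃ A : Fin t → Fin d → Finset ℕ,
        (∀ (i i' : Fin t) (j j' : Fin d),
          A i j ∩ A i' j' = ∅ ↔ (i = i' ∧ j ≠ j')) ∧
        (∑ i : Fin t, ∑ j : Fin d, ((A i j).card : ℝ)) <
          c * d ^ 2 * t * Real.logb 2 t := by
  obtain ⟨p, hp_ge, hpp⟩ := Nat.exists_infinite_primes (⌈(2:ℝ) ^ (2 / c)⌉₊ + 1)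
  haveI : Fact p.Prime := ⟨hpp⟩
  haveI : NeZero p := ⟨hpp.pos.ne'⟩
  have hp2 : 2 ≤ p := hpp.two_le
  have hp1 : 1 < p := hp2
  have hp0 : 0 < p := by omega
  have hpR : (2:ℝ) ^ (2 / c) ≤ (p : ℝ) := by
    have h1 : (⌈(2:ℝ) ^ (2 / c)⌉₊ : ℝ) ≤ (p : ℝ) := by
      exact_mod_cast le_trans (Nat.le_succ _) hp_ge
    exact le_trans (Nat.le_ceil _) h1
  refine ⟨p, hp2, ⌈(2:ℝ) ^ (2 / c)⌉₊ + 2, ?_⟩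
  intro t ht
  have ht2 : 2 ≤ t := by omega
  have htR : (2:ℝ) ^ (2 / c) < (t : ℝ) := by
    have h1 : (⌈(2:ℝ) ^ (2 / c)⌉₊ : ℝ) + 2 ≤ (t : ℝ) := by exact_mod_cast ht
    nlinarith [Nat.le_ceil ((2:ℝ) ^ (2 / c))]
  set m : ℕ := Nat.log p t + 1 with hm
  set J : Fin p → ZMod p := fun j => ((j : ℕ) : ZMod p) with hJ
  set X : ℕ → Fin t → ZMod p := fun k i => (((i : ℕ) / p ^ k % p : ℕ) : ZMod p) with hX
  set A : Fin t → Fin p → Finset ℕ := fun i j =>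
    (Finset.range m ×ˢ (Finset.univ : Finset (ZMod p))).image
      (fun ks => stmt13enc p ks.1 (ks.2).val ((ks.2 * X ks.1 i + J j).val)) with hA
  have memA : ∀ (i : Fin t) (j : Fin p) (n : ℕ),
      n ∈ A i j ↔ ∃ k < m, ∃ s : ZMod p,
        n = stmt13enc p k s.val ((s * X k i + J j).val) := by
    intro i j n
    simp only [hA, Finset.mem_image, Finset.mem_product, Finset.mem_range,
      Finset.mem_univ, and_true, Prod.exists]
    constructor
    · rintro ⟨k, s, hk, rfl⟩; exact ⟨k, hk, s, rfl⟩
    · rintro ⟨k, hk, s, rfl⟩; exact ⟨k, s, hk, rfl⟩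
  have hJinj : ∀ j j' : Fin p, J j = J j' → j = j' := by
    intro j j' h
    have := congrArg ZMod.val h
    rw [hJ] at this
    simp only at this
    rw [ZMod.val_natCast_of_lt j.isLt, ZMod.val_natCast_of_lt j'.isLt] at this
    exact Fin.ext this
  have hiff : ∀ (i i' : Fin t) (j j' : Fin p),
      A i j ∩ A i' j' = ∅ ↔ (i = i' ∧ j ≠ j') := by
    intro i i' j j'
    constructor
    · intro hemp
      by_contra hcon
      rcases eq_or_ne i i' with rfl | hii
      · have hjj : j = j' := by tauto
        subst hjj
        have hmem : stmt13enc p 0 (0 : ZMod p).val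
            (((0 : ZMod p) * X 0 i + J j).val) ∈ A i j ∩ A i j := by
          rw [Finset.mem_inter]
          exact ⟨(memA i j _).2 ⟨0, Nat.succ_pos _, 0, rfl⟩,
                 (memA i j _).2 ⟨0, Nat.succ_pos _, 0, rfl⟩⟩
        rw [hemp] at hmem
        exact absurd hmem (Finset.notMem_empty _)
      · have hit : (i : ℕ) < p ^ m := lt_of_lt_of_le i.isLt
          (le_of_lt (Nat.lt_pow_succ_log_self hp1 t))
        have hit' : (i' : ℕ) < p ^ m := lt_of_lt_of_le i'.isLt
          (le_of_lt (Nat.lt_pow_succ_log_self hp1 t))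
        have hex : ∃ k < m, (i : ℕ) / p ^ k % p ≠ (i' : ℕ) / p ^ k % p := by
          by_contra hAll
          push_neg at hAll
          exact hii (Fin.ext (stmt13dig_unique hp1 m _ hit _ hit' hAll))
        obtain ⟨k, hk, hdig⟩ := hex
        have ha : X k i ≠ X k i' := by
          intro h
          apply hdig
          have := congrArg ZMod.val h
          rw [hX] at this
          simp only at this
          rwa [ZMod.val_natCast_of_lt (Nat.mod_lt _ hp0),
            ZMod.val_natCast_of_lt (Nat.mod_lt _ hp0)] at this
        have hne : X k i - X k i' ≠ 0 := sub_ne_zero.mpr ha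
        set s : ZMod p := (J j' - J j) * (X k i - X k i')⁻¹ with hs
        have hkey : s * X k i + J j = s * X k i' + J j' := by
          have h1 : s * (X k i - X k i') = J j' - J j := by
            rw [hs, mul_assoc, inv_mul_cancel₀ hne, mul_one]
          linear_combination h1
        have hmem : stmt13enc p k s.val ((s * X k i + J j).val) ∈ A i j ∩ A i' j' := by
          rw [Finset.mem_inter]
          refine ⟨(memA i j _).2 ⟨k, hk, s, rfl⟩, (memA i' j' _).2 ⟨k, hk, s, ?_⟩⟩
          rw [hkey]
        rw [hemp] at hmem
        exact absurd hmem (Finset.notMem_empty _)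
    · rintro ⟨rfl, hjj⟩
      rw [Finset.eq_empty_iff_forall_notMem]
      intro n hn
      rw [Finset.mem_inter, memA, memA] at hn
      obtain ⟨⟨k, hk, s, rfl⟩, ⟨k', hk', s', heq⟩⟩ := hn
      obtain ⟨hkk, hss, huu⟩ := stmt13enc_inj (ZMod.val_lt _) (ZMod.val_lt _)
        (ZMod.val_lt _) (ZMod.val_lt _) heq
      subst hkk
      have hss' : s = s' := ZMod.val_injective p hss
      subst hss'
      have huu' : s * X k i + J j = s * X k i + J j' := ZMod.val_injective p huu
      exact hjj (hJinj j j' (by linear_combination huu'))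
  have hcard : ∀ (i : Fin t) (j : Fin p), (A i j).card ≤ m * p := by
    intro i j
    calc (A i j).card
        ≤ (Finset.range m ×ˢ (Finset.univ : Finset (ZMod p))).card :=
          Finset.card_image_le
      _ = m * p := by
          rw [Finset.card_product, Finset.card_range, Finset.card_univ, ZMod.card]
  refine ⟨A, hiff, ?_⟩
  have hsum : (∑ i : Fin t, ∑ j : Fin p, ((A i j).card : ℝ))
      ≤ (m : ℝ) * ((p : ℝ) ^ 2 * t) := by
    calc (∑ i : Fin t, ∑ j : Fin p, ((A i j).card : ℝ))
        ≤ ∑ _i : Fin t, ∑ _j : Fin p, ((m * p : ℕ) : ℝ) := by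
          apply Finset.sum_le_sum
          intro i _
          apply Finset.sum_le_sum
          intro j _
          exact_mod_cast hcard i j
      _ = (m : ℝ) * ((p : ℝ) ^ 2 * t) := by
          simp [Finset.sum_const]
          push_cast
          ring
  -- analytic estimate : m < c * logb 2 t
  have hlog2 : (0:ℝ) < Real.log 2 := Real.log_pos (by norm_num)
  have hlogt : 2 / c < Real.logb 2 t := by
    have h1 : Real.logb 2 ((2:ℝ) ^ (2 / c)) < Real.logb 2 t :=
      Real.logb_lt_logb (by norm_num) (Real.rpow_pos_of_pos (by norm_num) _) htR
    rwa [Real.logb_rpow (by norm_num) (by norm_num)] at h1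
  have hlogbt_pos : 0 < Real.logb 2 t := lt_trans (by positivity) hlogt
  have hmlt : (m : ℝ) < c * Real.logb 2 t := by
    have h1 : (Nat.log p t : ℝ) ≤ Real.logb p t := Real.natLog_le_logb t p
    have hlogp : (2 / c) * Real.log 2 ≤ Real.log p := by
      have := Real.log_le_log (by positivity) hpR
      rwa [Real.log_rpow (by norm_num)] at this
    have hlogp_pos : (0:ℝ) < (2 / c) * Real.log 2 := by positivity
    have hlogt_nonneg : 0 ≤ Real.log t := Real.log_nonneg (by
      have : (1:ℝ) ≤ (t:ℝ) := by exact_mod_cast (by omega : 1 ≤ t)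
      exact this)
    have h2 : Real.logb p t ≤ Real.log t / ((2 / c) * Real.log 2) := by
      rw [Real.logb]
      exact div_le_div_of_nonneg_left hlogt_nonneg hlogp_pos hlogp
    have h3 : Real.log t / ((2 / c) * Real.log 2) = (c / 2) * Real.logb 2 t := by
      rw [Real.logb]
      field_simp
    have h4 : (Nat.log p t : ℝ) ≤ (c / 2) * Real.logb 2 t := by
      calc (Nat.log p t : ℝ) ≤ Real.logb p t := h1
        _ ≤ Real.log t / ((2 / c) * Real.log 2) := h2
        _ = (c / 2) * Real.logb 2 t := h3
    have h5 : (1:ℝ) < (c / 2) * Real.logb 2 t := by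
      have := (div_lt_iff₀ hc).mp hlogt
      nlinarith
    have hmcast : (m : ℝ) = (Nat.log p t : ℝ) + 1 := by
      rw [hm]; push_cast; ring
    rw [hmcast]
    nlinarith
  calc (∑ i : Fin t, ∑ j : Fin p, ((A i j).card : ℝ))
      ≤ (m : ℝ) * ((p : ℝ) ^ 2 * t) := hsum
    _ < (c * Real.logb 2 t) * ((p : ℝ) ^ 2 * t) := by
        apply mul_lt_mul_of_pos_right hmlt
        have : (0:ℝ) < (t:ℝ) := by exact_mod_cast lt_of_lt_of_le two_pos ht2
        positivity
    _ = c * (p : ℝ) ^ 2 * t * Real.logb 2 t := by ring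
end

section
/- For every fixed integer $d \ge 2$, every sufficiently large $t$, and any family $\{(A_i^1, \ldots, A_i^d) : 1 \le i \le t\}$ of finite sets such that $A_i^j \cap A_{i'}^{j'} = \emptyset$ if and only if $i = i'$ and $j \ne j'$, the real-valued quantity $\frac{1}{td} \sum_{j=1}^{d} \sum_{i=1}^{t} 2^{-(k_{i,j}+k_{i,j+1})} \ge 2^{-\frac{2}{td}\sum_{i,j} k_{i,j}}$ holds, where $k_{i,j} := |A_i^j|$ and $k_{i,d+1} := k_{i,1}$; consequently $2^{\frac{2}{td}\sum_{i,j} k_{i,j}} \ge t$. -/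
open Finset

lemma boll_aux {α : Type*} [DecidableEq α] {t : ℕ} (A B : Fin t → Finset α)
    (hdisj : ∀ i, A i ∩ B i = ∅)
    (hcross : ∀ i i', i ≠ i' → A i ∩ B i' ≠ ∅) :
    ∑ i : Fin t, ((2:ℝ) ^ ((A i).card + (B i).card))⁻¹ ≤ 1 := by
  classical
  set X : Finset α := Finset.univ.biUnion (fun i => A i ∪ B i) with hX
  have hsub : ∀ i, A i ∪ B i ⊆ X := fun i => Finset.subset_biUnion_of_mem (fun i => A i ∪ B i) (Finset.mem_univ i)
  set S : Fin t → Finset (Finset α) :=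
    fun i => X.powerset.filter (fun C => A i ⊆ C ∧ Disjoint (B i) C) with hS
  have hcardAB : ∀ i, (A i).card + (B i).card ≤ X.card := by
    intro i
    calc (A i).card + (B i).card = (A i ∪ B i).card := by
          rw [Finset.card_union_of_disjoint (Finset.disjoint_iff_inter_eq_empty.2 (hdisj i))]
      _ ≤ X.card := Finset.card_le_card (hsub i)
  have hcardS : ∀ i, (S i).card = 2 ^ (X.card - ((A i).card + (B i).card)) := by
    intro i
    have hb : (S i).card = ((X \ (A i ∪ B i)).powerset).card := by
      apply Finset.card_bij' (fun C _ => C \ A i) (fun D _ => D ∪ A i)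
      · intro C hC
        simp only [hS, Finset.mem_filter, Finset.mem_powerset] at hC
        obtain ⟨hCX, hAC, hBC⟩ := hC
        rw [Finset.mem_powerset]
        intro x hx
        rw [Finset.mem_sdiff] at hx ⊢
        refine ⟨hCX hx.1, ?_⟩
        simp only [Finset.mem_union, not_or]
        exact ⟨hx.2, fun hxB => (Finset.disjoint_left.1 hBC) hxB hx.1⟩
      · intro D hD
        rw [Finset.mem_powerset] at hD
        simp only [hS, Finset.mem_filter, Finset.mem_powerset]
        refine ⟨Finset.union_subset (fun x hx => (Finset.mem_sdiff.1 (hD hx)).1)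
          (fun x hx => hsub i (Finset.mem_union_left _ hx)), Finset.subset_union_right, ?_⟩
        rw [Finset.disjoint_union_right]
        constructor
        · exact Finset.disjoint_left.2 fun x hxB hxD => by
            have := Finset.mem_sdiff.1 (hD hxD)
            exact this.2 (Finset.mem_union_right _ hxB)
        · exact Finset.disjoint_left.2 fun x hxB hxA => by
            have : x ∈ A i ∩ B i := Finset.mem_inter.2 ⟨hxA, hxB⟩
            rw [hdisj i] at this; exact absurd this (Finset.notMem_empty x)
      · intro C hC
        simp only [hS, Finset.mem_filter, Finset.mem_powerset] at hC
        exact Finset.sdiff_union_of_subset hC.2.1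
      · intro D hD
        rw [Finset.mem_powerset] at hD
        apply Finset.union_sdiff_cancel_right
        exact Finset.disjoint_left.2 fun x hxD hxA => by
          have := Finset.mem_sdiff.1 (hD hxD)
          exact this.2 (Finset.mem_union_left _ hxA)
    rw [hb, Finset.card_powerset, Finset.card_sdiff_of_subset (hsub i),
      Finset.card_union_of_disjoint (Finset.disjoint_iff_inter_eq_empty.2 (hdisj i))]
  have hdisjS : ∀ i ∈ (univ : Finset (Fin t)), ∀ i' ∈ univ, i ≠ i' → Disjoint (S i) (S i') := by
    intro i _ i' _ hne
    rw [Finset.disjoint_left]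
    intro C hC hC'
    simp only [hS, Finset.mem_filter, Finset.mem_powerset] at hC hC'
    obtain ⟨x, hx⟩ := Finset.nonempty_iff_ne_empty.2 (hcross i i' hne)
    rw [Finset.mem_inter] at hx
    exact (Finset.disjoint_left.1 hC'.2.2) hx.2 (hC.2.1 hx.1)
  have hsum : ∑ i, (S i).card ≤ 2 ^ X.card := by
    calc ∑ i, (S i).card = (Finset.univ.biUnion S).card := (Finset.card_biUnion hdisjS).symm
      _ ≤ X.powerset.card := Finset.card_le_card (Finset.biUnion_subset.2
          fun i _ => Finset.filter_subset _ _)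
      _ = 2 ^ X.card := Finset.card_powerset X
  have h2 : (0:ℝ) < 2 ^ X.card := by positivity
  have key : ∀ i, ((2:ℝ) ^ ((A i).card + (B i).card))⁻¹
      = ((S i).card : ℝ) / 2 ^ X.card := by
    intro i
    rw [hcardS i]
    push_cast
    rw [eq_div_iff h2.ne', inv_mul_eq_div, div_eq_iff (by positivity), ← pow_add,
      Nat.sub_add_cancel (hcardAB i)]
  calc ∑ i : Fin t, ((2:ℝ) ^ ((A i).card + (B i).card))⁻¹
      = (∑ i, ((S i).card : ℝ)) / 2 ^ X.card := by
        rw [Finset.sum_div]; exact Finset.sum_congr rfl fun i _ => key i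
    _ ≤ 1 := by
        rw [div_le_one h2]
        calc (∑ i, ((S i).card : ℝ)) = ((∑ i, (S i).card : ℕ) : ℝ) := by push_cast; ring
          _ ≤ ((2 ^ X.card : ℕ) : ℝ) := by exact_mod_cast hsum
          _ = 2 ^ X.card := by push_cast; ring

/-- **Theorem (Jensen step and its consequence).** For every fixed `d ≥ 2` and
every sufficiently large `t`, and every family of finite sets
`{(A i 1, …, A i d) : 1 ≤ i ≤ t}` with `A i j ∩ A i' j' = ∅` iff `i = i'` and
`j ≠ j'`, writing `k i j := |A i j|` with the column index interpreted
cyclically, we have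
`(1/(td)) ∑_{j=1}^{d} ∑_{i=1}^{t} 2^{-(k i j + k i (j+1))} ≥ 2^{-(2/(td)) ∑_{i,j} k i j}`,
and consequently `2^{(2/(td)) ∑_{i,j} k i j} ≥ t`. -/
theorem stmt14 (d : ℕ) (hd : 2 ≤ d) :
    ∃ t0 : ℕ, ∀ t : ℕ, t0 ≤ t →
      ∀ {α : Type*} [DecidableEq α] (A : Fin t → Fin d → Finset α),
        (∀ (i i' : Fin t) (j j' : Fin d),
          A i j ∩ A i' j' = ∅ ↔ (i = i' ∧ j ≠ j')) →
        ((2 : ℝ) ^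
            (-(2 / ((t : ℝ) * d)) * ∑ i : Fin t, ∑ j : Fin d, ((A i j).card : ℝ))
          ≤ (1 / ((t : ℝ) * d)) *
            ∑ j : Fin d, ∑ i : Fin t,
              ((2 : ℝ) ^
                ((A i j).card +
                  (A i ⟨((j : ℕ) + 1) % d, Nat.mod_lt _ (by omega)⟩).card))⁻¹) ∧
        (t : ℝ) ≤
          (2 : ℝ) ^
            ((2 / ((t : ℝ) * d)) * ∑ i : Fin t, ∑ j : Fin d, ((A i j).card : ℝ)) := by
  refine ⟨1, ?_⟩
  intro t ht α _ A hA
  have hd0 : 0 < d := by omega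
  haveI : NeZero d := ⟨by omega⟩
  have ht0 : 0 < t := ht
  set nxt : Fin d → Fin d := fun j => ⟨((j : ℕ) + 1) % d, Nat.mod_lt _ hd0⟩ with hnxtdef
  have hnxt_eq : ∀ j : Fin d, nxt j = j + 1 := by
    intro j
    apply Fin.ext
    rw [Fin.add_def]
    have h1 : ((1 : Fin d) : ℕ) = 1 % d := rfl
    rw [h1, Nat.mod_eq_of_lt (by omega : 1 < d)]
  have hbij : Function.Bijective nxt := by
    have h : nxt = (· + (1 : Fin d)) := funext hnxt_eq
    rw [h]
    exact (Equiv.addRight (1 : Fin d)).bijective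
  set N : ℝ := (t : ℝ) * d with hNdef
  have hNpos : (0 : ℝ) < N := by
    apply mul_pos
    · exact_mod_cast ht0
    · exact_mod_cast hd0
  set S : ℝ := ∑ i : Fin t, ∑ j : Fin d, ((A i j).card : ℝ) with hSdef
  have hcyc : ∀ i, ∑ j : Fin d, ((A i (nxt j)).card : ℝ)
      = ∑ j : Fin d, ((A i j).card : ℝ) :=
    fun i => Fintype.sum_bijective nxt hbij _ _ (fun j => rfl)
  -- sum of the "doubled" exponents is 2S
  have hsum2 : ∑ p : Fin d × Fin t,
      ((((A p.2 p.1).card + (A p.2 (nxt p.1)).card : ℕ)) : ℝ) = 2 * S := by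
    rw [Fintype.sum_prod_type]
    push_cast
    rw [Finset.sum_comm]
    simp_rw [Finset.sum_add_distrib]
    rw [hSdef]
    have : ∑ i : Fin t, ∑ j : Fin d, ((A i (nxt j)).card : ℝ)
        = ∑ i : Fin t, ∑ j : Fin d, ((A i j).card : ℝ) :=
      Finset.sum_congr rfl fun i _ => hcyc i
    rw [this]
    ring
  -- Jensen / AM-GM step
  have jensen := Real.geom_mean_le_arith_mean_weighted (Finset.univ : Finset (Fin d × Fin t))
    (fun _ => 1 / N)
    (fun p => ((2 : ℝ) ^ ((A p.2 p.1).card + (A p.2 (nxt p.1)).card))⁻¹)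
    (fun i _ => by positivity)
    (by
      rw [Finset.sum_const, Finset.card_univ, Fintype.card_prod, Fintype.card_fin,
        Fintype.card_fin, nsmul_eq_mul, hNdef]
      push_cast
      field_simp)
    (fun i _ => by positivity)
  have hprod : ∏ p : Fin d × Fin t,
      (((2 : ℝ) ^ ((A p.2 p.1).card + (A p.2 (nxt p.1)).card))⁻¹) ^ (1 / N)
      = (2 : ℝ) ^ (-(2 / N) * S) := by
    have hfac : ∀ p : Fin d × Fin t,
        (((2 : ℝ) ^ ((A p.2 p.1).card + (A p.2 (nxt p.1)).card))⁻¹) ^ (1 / N)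
        = (2 : ℝ) ^ (-((((A p.2 p.1).card + (A p.2 (nxt p.1)).card : ℕ)) : ℝ) * (1 / N)) := by
      intro p
      rw [Real.rpow_mul (by norm_num : (0:ℝ) ≤ 2), Real.rpow_neg (by norm_num),
        Real.rpow_natCast]
    rw [Finset.prod_congr rfl (fun p _ => hfac p),
      ← Real.rpow_sum_of_pos (by norm_num : (0:ℝ) < 2)]
    congr 1
    rw [← Finset.sum_mul]
    have : ∑ p : Fin d × Fin t,
        (-((((A p.2 p.1).card + (A p.2 (nxt p.1)).card : ℕ)) : ℝ)) = -(2 * S) := by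
      rw [Finset.sum_neg_distrib, hsum2]
    rw [this]
    field_simp
  have h1 : (2 : ℝ) ^ (-(2 / N) * S)
      ≤ (1 / N) * ∑ j : Fin d, ∑ i : Fin t,
          ((2 : ℝ) ^ ((A i j).card + (A i (nxt j)).card))⁻¹ := by
    calc (2 : ℝ) ^ (-(2 / N) * S)
        = ∏ p : Fin d × Fin t,
            (((2 : ℝ) ^ ((A p.2 p.1).card + (A p.2 (nxt p.1)).card))⁻¹) ^ (1 / N) :=
          hprod.symm
      _ ≤ ∑ p : Fin d × Fin t,
            (1 / N) * ((2 : ℝ) ^ ((A p.2 p.1).card + (A p.2 (nxt p.1)).card))⁻¹ := jensen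
      _ = (1 / N) * ∑ j : Fin d, ∑ i : Fin t,
            ((2 : ℝ) ^ ((A i j).card + (A i (nxt j)).card))⁻¹ := by
          rw [← Finset.mul_sum, Fintype.sum_prod_type]
  -- Bollobás bound: the double sum is at most d
  have hne : ∀ j : Fin d, j ≠ nxt j := by
    intro j h
    have hv : (j : ℕ) = ((j : ℕ) + 1) % d := congrArg Fin.val h
    have hjlt := j.isLt
    by_cases hlt : (j : ℕ) + 1 < d
    · rw [Nat.mod_eq_of_lt hlt] at hv; omega
    · have he : (j : ℕ) + 1 = d := by omega
      rw [he, Nat.mod_self] at hv; omega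
  have hB : ∑ j : Fin d, ∑ i : Fin t,
      ((2 : ℝ) ^ ((A i j).card + (A i (nxt j)).card))⁻¹ ≤ d := by
    calc ∑ j : Fin d, ∑ i : Fin t,
        ((2 : ℝ) ^ ((A i j).card + (A i (nxt j)).card))⁻¹
        ≤ ∑ _j : Fin d, (1 : ℝ) := by
          apply Finset.sum_le_sum
          intro j _
          exact boll_aux (fun i => A i j) (fun i => A i (nxt j))
            (fun i => (hA i i j (nxt j)).2 ⟨rfl, hne j⟩)
            (fun i i' hii h => hii ((hA i i' j (nxt j)).1 h).1)
      _ = d := by simp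
  have h2 : (t : ℝ) ≤ (2 : ℝ) ^ ((2 / N) * S) := by
    have hc : (2 : ℝ) ^ (-(2 / N) * S) ≤ 1 / t := by
      calc (2 : ℝ) ^ (-(2 / N) * S)
          ≤ (1 / N) * ∑ j : Fin d, ∑ i : Fin t,
              ((2 : ℝ) ^ ((A i j).card + (A i (nxt j)).card))⁻¹ := h1
        _ ≤ (1 / N) * d := by
            apply mul_le_mul_of_nonneg_left hB
            positivity
        _ = 1 / t := by
            rw [hNdef]
            have htd : ((t : ℝ)) ≠ 0 := by positivity
            have hdd : ((d : ℝ)) ≠ 0 := by positivity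
            field_simp
    have hneg : -(2 / N) * S = -((2 / N) * S) := by ring
    rw [hneg, Real.rpow_neg (by norm_num : (0:ℝ) ≤ 2), one_div] at hc
    have hxpos : (0 : ℝ) < (2 : ℝ) ^ ((2 / N) * S) := Real.rpow_pos_of_pos (by norm_num) _
    have htpos : (0 : ℝ) < (t : ℝ) := by exact_mod_cast ht0
    exact (inv_le_inv₀ hxpos htpos).1 hc
  exact ⟨h1, h2⟩
end
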